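/- arXiv:1907.09012 — 11 statements merged into one kernel-verified Lean document; each statement's English description precedes it below -/
import Mathlib

section
/- Let (φ_i)_{i∈ℕ} and g be functions from [0,∞) to [0,∞), where each φ_i is Lipschitz with Lipschitz constant L_i > 0, and let a_i ≥ 0. Assume (condition (B)): for every i there is a constant c_i > 0 with φ_i(t) ≤ c_i·g(t) for all t ≥ 0, and a_i·L_i/c_i ≥ ∑_{j≠i} L_j·w_{ij} − ∑_{j≠i} L_j·v_{ij}, where both series converge. Then for every i and every t ≥ 0 one has −a_i·L_i·g(t) + φ_i(t)·(−L_i·t − ∑_{j≠i} L_j·v_{ij} + ∑_{j≠i} L_j·w_{ij}) ≤ 0; consequently, for every x : ℕ → [0,∞) for which the series converges, ∑_i [−a_i·L_i·g(x_i) + φ_i(x_i)·(−L_i·x_i − ∑_{j≠i} L_j·v_{ij} + ∑_{j≠i} L_j·w_{ij})] ≤ 0. -/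
/- STATEMENT 0: the key inequality 𝓛h ≤ 0 (Theorem 2.1, condition (B)) for the
Galves–Löcherbach-type generator applied to h(x) = ∑ᵢ Lᵢ·xᵢ. -/
theorem glm_generator_nonpos_condition_B
    (φ : ℕ → ℝ → ℝ) (g : ℝ → ℝ) (L a c : ℕ → ℝ) (W : ℕ → ℕ → ℝ)
    (v w : ℕ → ℕ → ℝ)
    (hv : ∀ i j, v i j = max (-W i j) 0)
    (hw : ∀ i j, w i j = max (W i j) 0)
    (hφ_nonneg : ∀ i t, 0 ≤ t → 0 ≤ φ i t)
    (hg_nonneg : ∀ t, 0 ≤ t → 0 ≤ g t)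
    (hL : ∀ i, 0 < L i)
    (hφ_lip : ∀ i, LipschitzOnWith (Real.toNNReal (L i)) (φ i) (Set.Ici 0))
    (ha : ∀ i, 0 ≤ a i)
    (hc : ∀ i, 0 < c i)
    (hφg : ∀ i t, 0 ≤ t → φ i t ≤ c i * g t)
    (hSv : ∀ i, Summable (fun j : {j : ℕ // j ≠ i} => L j.1 * v i j.1))
    (hSw : ∀ i, Summable (fun j : {j : ℕ // j ≠ i} => L j.1 * w i j.1))
    (hB : ∀ i, a i * L i / c i ≥
      (∑' j : {j : ℕ // j ≠ i}, L j.1 * w i j.1) -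
      (∑' j : {j : ℕ // j ≠ i}, L j.1 * v i j.1)) :
    (∀ i t, 0 ≤ t →
      -(a i) * L i * g t + φ i t *
        (-(L i * t) - (∑' j : {j : ℕ // j ≠ i}, L j.1 * v i j.1)
          + ∑' j : {j : ℕ // j ≠ i}, L j.1 * w i j.1) ≤ 0) ∧
    (∀ x : ℕ → ℝ, (∀ i, 0 ≤ x i) →
      Summable (fun i => -(a i) * L i * g (x i) + φ i (x i) *
        (-(L i * x i) - (∑' j : {j : ℕ // j ≠ i}, L j.1 * v i j.1)
          + ∑' j : {j : ℕ // j ≠ i}, L j.1 * w i j.1)) →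
      (∑' i : ℕ, (-(a i) * L i * g (x i) + φ i (x i) *
        (-(L i * x i) - (∑' j : {j : ℕ // j ≠ i}, L j.1 * v i j.1)
          + ∑' j : {j : ℕ // j ≠ i}, L j.1 * w i j.1))) ≤ 0) := by

  have key : ∀ i t, 0 ≤ t →
      -(a i) * L i * g t + φ i t *
        (-(L i * t) - (∑' j : {j : ℕ // j ≠ i}, L j.1 * v i j.1)
          + ∑' j : {j : ℕ // j ≠ i}, L j.1 * w i j.1) ≤ 0 := by
    intro i t ht
    set Sv := ∑' j : {j : ℕ // j ≠ i}, L j.1 * v i j.1 with hSvdef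
    set Sw := ∑' j : {j : ℕ // j ≠ i}, L j.1 * w i j.1 with hSwdef
    have hφt := hφ_nonneg i t ht
    have hgt := hg_nonneg t ht
    have h1 : φ i t * (-(L i * t) - Sv + Sw) = φ i t * (-(L i * t)) + φ i t * (Sw - Sv) := by ring
    rw [h1]
    have h2 : φ i t * (-(L i * t)) ≤ 0 := by
      have : 0 ≤ L i * t := mul_nonneg (hL i).le ht
      nlinarith
    rcases le_or_gt (Sw - Sv) 0 with hS | hS
    · have h3 : φ i t * (Sw - Sv) ≤ 0 := mul_nonpos_of_nonneg_of_nonpos hφt hS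
      have h4 : -(a i) * L i * g t ≤ 0 := by
        have : 0 ≤ a i * L i * g t := mul_nonneg (mul_nonneg (ha i) (hL i).le) hgt
        linarith
      linarith
    · have h3 : φ i t * (Sw - Sv) ≤ c i * g t * (a i * L i / c i) := by
        calc φ i t * (Sw - Sv) ≤ (c i * g t) * (Sw - Sv) :=
              mul_le_mul_of_nonneg_right (hφg i t ht) hS.le
          _ ≤ (c i * g t) * (a i * L i / c i) :=
              mul_le_mul_of_nonneg_left (hB i) (mul_nonneg (hc i).le hgt)
      have h4 : c i * g t * (a i * L i / c i) = a i * L i * g t := by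
        have hcne := (hc i).ne'
        field_simp
      rw [h4] at h3
      linarith
  refine ⟨key, fun x hx hsum => tsum_nonpos fun i => key i (x i) (hx i)⟩
end

section
/- Let (φ_i)_{i∈ℕ} be functions from [0,∞) to [0,∞), each Lipschitz with Lipschitz constant L_i > 0, let g : [0,∞) → [0,∞) and a_i ≥ 0, and assume the series ∑_{j≠i} L_j·v_{ij} and ∑_{j≠i} L_j·w_{ij} converge for every i. Assume B := sup_i (∑_{j≠i} L_j·w_{ij} − ∑_{j≠i} L_j·v_{ij}) satisfies 0 ≤ B < ∞ and that ∑_i φ_i(0) < ∞, and set D := B·∑_i φ_i(0). Then for every x : ℕ → [0,∞) with ∑_i L_i·x_i < ∞ and for which the left-hand series converges absolutely, ∑_i [−a_i·L_i·g(x_i) + φ_i(x_i)·(−L_i·x_i − ∑_{j≠i} L_j·v_{ij} + ∑_{j≠i} L_j·w_{ij})] ≤ B·(∑_i L_i·x_i) + D. -/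
/-!
Each summand is bounded termwise: the leak term `-aᵢ Lᵢ g(xᵢ)` and `-φᵢ(xᵢ) Lᵢ xᵢ` are
nonpositive, the synaptic term `φᵢ(xᵢ) (∑ Lⱼ wᵢⱼ - ∑ Lⱼ vᵢⱼ)` is at most `B φᵢ(xᵢ)`, and the
Lipschitz bound `φᵢ(xᵢ) ≤ Lᵢ xᵢ + φᵢ(0)` turns this into `B Lᵢ xᵢ + B φᵢ(0)`. Summing gives
`B h(x) + D`.
-/

lemma LipschitzOnWith.apply_le_mul_add_apply_zero {f : ℝ → ℝ} {K : ℝ}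
    (hf : LipschitzOnWith K.toNNReal f (Set.Ici 0)) (hK : 0 ≤ K) {t : ℝ} (ht : 0 ≤ t) :
    f t ≤ K * t + f 0 := by
  have h := hf.dist_le_mul t (Set.mem_Ici.2 ht) 0 Set.self_mem_Ici
  rw [Real.dist_eq, Real.dist_eq, sub_zero, abs_of_nonneg ht, Real.coe_toNNReal _ hK] at h
  linarith [le_abs_self (f t - f 0)]

lemma drift_term_le {a L gx x φx φ0 sv sw B : ℝ} (ha : 0 ≤ a) (hL : 0 ≤ L) (hgx : 0 ≤ gx)
    (hx : 0 ≤ x) (hφx : 0 ≤ φx) (hφx_le : φx ≤ L * x + φ0) (hB : 0 ≤ B) (hswv : sw - sv ≤ B) :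
    -a * L * gx + φx * (-(L * x) - sv + sw) ≤ B * (L * x) + B * φ0 := by
  have hleak : 0 ≤ a * L * gx := by positivity
  have hself : 0 ≤ φx * (L * x) := by positivity
  calc -a * L * gx + φx * (-(L * x) - sv + sw)
      = -(a * L * gx) - φx * (L * x) + φx * (sw - sv) := by ring
    _ ≤ φx * B := by linarith [mul_le_mul_of_nonneg_left hswv hφx]
    _ ≤ (L * x + φ0) * B := mul_le_mul_of_nonneg_right hφx_le hB
    _ = B * (L * x) + B * φ0 := by ring

theorem glm_generator_foster_lyapunov_condition_C_general
    (φ : ℕ → ℝ → ℝ) (g : ℝ → ℝ) (L a : ℕ → ℝ)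
    (v w : ℕ → ℕ → ℝ) (B D : ℝ)
    (hφ_nonneg : ∀ i t, 0 ≤ t → 0 ≤ φ i t)
    (hg_nonneg : ∀ t, 0 ≤ t → 0 ≤ g t)
    (hL : ∀ i, 0 < L i)
    (hφ_lip : ∀ i, LipschitzOnWith (Real.toNNReal (L i)) (φ i) (Set.Ici 0))
    (ha : ∀ i, 0 ≤ a i)
    (hBdd : BddAbove (Set.range fun i : ℕ =>
      (∑' j : {j : ℕ // j ≠ i}, L j.1 * w i j.1) -
      (∑' j : {j : ℕ // j ≠ i}, L j.1 * v i j.1)))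
    (hB : B = ⨆ i : ℕ,
      ((∑' j : {j : ℕ // j ≠ i}, L j.1 * w i j.1) -
       (∑' j : {j : ℕ // j ≠ i}, L j.1 * v i j.1)))
    (hB_nonneg : 0 ≤ B)
    (hφ0 : Summable (fun i : ℕ => φ i 0))
    (hD : D = B * ∑' i : ℕ, φ i 0) :
    ∀ x : ℕ → ℝ, (∀ i, 0 ≤ x i) →
      Summable (fun i : ℕ => L i * x i) →
      Summable (fun i : ℕ => |(-(a i) * L i * g (x i) + φ i (x i) *
        (-(L i * x i) - (∑' j : {j : ℕ // j ≠ i}, L j.1 * v i j.1)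
          + ∑' j : {j : ℕ // j ≠ i}, L j.1 * w i j.1))|) →
      (∑' i : ℕ, (-(a i) * L i * g (x i) + φ i (x i) *
        (-(L i * x i) - (∑' j : {j : ℕ // j ≠ i}, L j.1 * v i j.1)
          + ∑' j : {j : ℕ // j ≠ i}, L j.1 * w i j.1)))
        ≤ B * (∑' i : ℕ, L i * x i) + D := by
  intro x hx hSx habs
  have hterm : ∀ i, -(a i) * L i * g (x i) + φ i (x i) *
      (-(L i * x i) - (∑' j : {j : ℕ // j ≠ i}, L j.1 * v i j.1)
        + ∑' j : {j : ℕ // j ≠ i}, L j.1 * w i j.1) ≤ B * (L i * x i) + B * φ i 0 := fun i =>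
    drift_term_le (ha i) (hL i).le (hg_nonneg _ (hx i)) (hx i) (hφ_nonneg i _ (hx i))
      ((hφ_lip i).apply_le_mul_add_apply_zero (hL i).le (hx i)) hB_nonneg
      (hB ▸ le_ciSup hBdd i)
  calc _ ≤ ∑' i, (B * (L i * x i) + B * φ i 0) :=
        habs.of_abs.tsum_le_tsum hterm ((hSx.mul_left B).add (hφ0.mul_left B))
    _ = B * (∑' i, L i * x i) + D := by
        rw [(hSx.mul_left B).tsum_add (hφ0.mul_left B), tsum_mul_left, tsum_mul_left, hD]

theorem glm_generator_foster_lyapunov_condition_C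
    (φ : ℕ → ℝ → ℝ) (g : ℝ → ℝ) (L a : ℕ → ℝ) (W : ℕ → ℕ → ℝ)
    (v w : ℕ → ℕ → ℝ) (B D : ℝ)
    (hv : ∀ i j, v i j = max (-W i j) 0)
    (hw : ∀ i j, w i j = max (W i j) 0)
    (hφ_nonneg : ∀ i t, 0 ≤ t → 0 ≤ φ i t)
    (hg_nonneg : ∀ t, 0 ≤ t → 0 ≤ g t)
    (hL : ∀ i, 0 < L i)
    (hφ_lip : ∀ i, LipschitzOnWith (Real.toNNReal (L i)) (φ i) (Set.Ici 0))
    (ha : ∀ i, 0 ≤ a i)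
    (hSv : ∀ i, Summable (fun j : {j : ℕ // j ≠ i} => L j.1 * v i j.1))
    (hSw : ∀ i, Summable (fun j : {j : ℕ // j ≠ i} => L j.1 * w i j.1))
    (hBdd : BddAbove (Set.range fun i : ℕ =>
      (∑' j : {j : ℕ // j ≠ i}, L j.1 * w i j.1) -
      (∑' j : {j : ℕ // j ≠ i}, L j.1 * v i j.1)))
    (hB : B = ⨆ i : ℕ,
      ((∑' j : {j : ℕ // j ≠ i}, L j.1 * w i j.1) -
       (∑' j : {j : ℕ // j ≠ i}, L j.1 * v i j.1)))
    (hB_nonneg : 0 ≤ B)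
    (hφ0 : Summable (fun i : ℕ => φ i 0))
    (hD : D = B * ∑' i : ℕ, φ i 0) :
    ∀ x : ℕ → ℝ, (∀ i, 0 ≤ x i) →
      Summable (fun i : ℕ => L i * x i) →
      Summable (fun i : ℕ => |(-(a i) * L i * g (x i) + φ i (x i) *
        (-(L i * x i) - (∑' j : {j : ℕ // j ≠ i}, L j.1 * v i j.1)
          + ∑' j : {j : ℕ // j ≠ i}, L j.1 * w i j.1))|) →
      (∑' i : ℕ, (-(a i) * L i * g (x i) + φ i (x i) *
        (-(L i * x i) - (∑' j : {j : ℕ // j ≠ i}, L j.1 * v i j.1)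
          + ∑' j : {j : ℕ // j ≠ i}, L j.1 * w i j.1)))
        ≤ B * (∑' i : ℕ, L i * x i) + D :=
  glm_generator_foster_lyapunov_condition_C_general φ g L a v w B D hφ_nonneg hg_nonneg hL hφ_lip ha
    hBdd hB hB_nonneg hφ0 hD
end

section
/- Let (W_{ij})_{i,j∈ℕ, i≠j} be synaptic weights with c_i := ∑_{j≠i} 2^{−j}·|W_{ij}| < ∞, let (φ_i)_{i∈ℕ} be nonnegative nondecreasing functions on [0,∞), g : [0,∞) → [0,∞), k₁ > 0 and a_i ≥ 0 such that for all i and all t ≥ s ≥ 0: φ_i(t) − φ_i(s) ≤ g(t) − g(s) (W2), g(t) − g(s) ≥ k₁·(t − s) (W3), and s·(φ_i(t) − φ_i(s)) ≤ φ_i(t)·(t − s) (W4). Assume δ := inf_i (a_i − 2^i·c_i) > 0. For x, y : ℕ → [0,∞) define H(x,y) = ∑_i 2^{−i}·|x_i − y_i|, define Δ_i(x)_j = max(x_j + W_{ij}, 0) for j ≠ i and Δ_i(x)_i = 0, and define G(x,y) = ∑_i a_i·2^{−i}·[(−1)^{1+𝟙{x_i<y_i}}·g(x_i) + (−1)^{1+𝟙{y_i<x_i}}·g(y_i)]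 + ∑_i min(φ_i(x_i), φ_i(y_i))·(H(Δ_i(x), Δ_i(y)) − H(x,y)) + ∑_i max(φ_i(x_i) − φ_i(y_i), 0)·(H(Δ_i(x), y) − H(x,y)) + ∑_i max(φ_i(y_i) − φ_i(x_i), 0)·(H(x, Δ_i(y)) − H(x,y)). Then, for all x, y for which all the series above converge absolutely, G(x,y) ≤ −k₁·δ·H(x,y). -/
/-!
Everything reduces to one coordinate `i` at a time, and by symmetry to `s := xᵢ ≤ t := yᵢ`.
Firing both copies resets coordinate `i` and moves every other coordinate by the same amount
followed by the same `1`-Lipschitz truncation, so it lowers `H` by at least `2⁻ⁱ (t - s)`.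
Firing only the copy `y` (rate `φᵢ(t) - φᵢ(s)`) raises `H` by at most `2⁻ⁱ (s - (t - s)) + cᵢ`.
By (W4) the two jump contributions together are at most `(φᵢ(t) - φᵢ(s)) cᵢ ≤ (g t - g s) cᵢ`
(W2), which the drift `-aᵢ 2⁻ⁱ (g t - g s)` beats by `(g t - g s) 2⁻ⁱ δ ≥ k₁ δ 2⁻ⁱ (t - s)`
(W3).
-/

/-- The distance `H` of the paper. -/
noncomputable def Hdist (x y : ℕ → ℝ) : ℝ :=
  ∑' i : ℕ, ((2 : ℝ) ^ i)⁻¹ * |x i - y i|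

/-- The jump map Δᵢ of the paper. -/
noncomputable def jumpMap (W : ℕ → ℕ → ℝ) (i : ℕ) (x : ℕ → ℝ) : ℕ → ℝ :=
  fun j => if j = i then 0 else max (x j + W i j) 0

lemma tsum_le_tsum_sub_add_of_forall_ne {ι α : Type*} [DecidableEq ι] [AddCommGroup α]
    [PartialOrder α] [IsOrderedAddMonoid α] [TopologicalSpace α] [ContinuousAdd α]
    [OrderClosedTopology α] {F f : ι → α} (i : ι)
    (hF : Summable F) (hf : Summable f) (h : ∀ j, j ≠ i → F j ≤ f j) :
    ∑' j, F j ≤ ∑' j, f j - f i + F i := by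
  have hle : ∀ j, F j ≤ f j + (Pi.single i (F i - f i) : ι → α) j := by
    intro j
    rcases eq_or_ne j i with rfl | hj
    · simp
    · simpa [hj] using h j hj
  have hsingle := hasSum_pi_single i (F i - f i)
  calc ∑' j, F j ≤ ∑' j, (f j + (Pi.single i (F i - f i) : ι → α) j) :=
        hF.tsum_le_tsum hle (hf.add hsingle.summable)
    _ = ∑' j, f j - f i + F i := by rw [hf.tsum_add hsingle.summable, hsingle.tsum_eq]; abel

lemma abs_max_add_zero_sub_le {u v w : ℝ} (hv : 0 ≤ v) : |max (u + w) 0 - v| ≤ |u - v| + |w| := by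
  rcases le_or_gt (u + w) 0 with h | h
  · rw [max_eq_right h, zero_sub, abs_neg, abs_of_nonneg hv]
    linarith [neg_abs_le (u - v), neg_abs_le w]
  · rw [max_eq_left h.le, add_sub_right_comm]
    exact abs_add_le _ _

lemma Hdist_comm (x y : ℕ → ℝ) : Hdist x y = Hdist y x :=
  tsum_congr fun i => by rw [abs_sub_comm]

lemma jumpMap_self (W : ℕ → ℕ → ℝ) (i : ℕ) (x : ℕ → ℝ) : jumpMap W i x i = 0 := if_pos rfl

lemma jumpMap_of_ne (W : ℕ → ℕ → ℝ) {i j : ℕ} (x : ℕ → ℝ) (hj : j ≠ i) :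
    jumpMap W i x j = max (x j + W i j) 0 := if_neg hj

lemma Hdist_jumpMap_jumpMap_le (W : ℕ → ℕ → ℝ) (i : ℕ) {x y : ℕ → ℝ}
    (hH : Summable fun j : ℕ => ((2 : ℝ) ^ j)⁻¹ * |x j - y j|)
    (hΔ : Summable fun j : ℕ => ((2 : ℝ) ^ j)⁻¹ * |jumpMap W i x j - jumpMap W i y j|) :
    Hdist (jumpMap W i x) (jumpMap W i y) ≤ Hdist x y - ((2 : ℝ) ^ i)⁻¹ * |x i - y i| := by
  have := tsum_le_tsum_sub_add_of_forall_ne i hΔ hH fun j hj => by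
    rw [jumpMap_of_ne W x hj, jumpMap_of_ne W y hj]
    gcongr _ * ?_
    simpa only [add_sub_add_right_eq_sub] using abs_max_sub_max_le_abs (x j + W i j) (y j + W i j) 0
  simpa [Hdist, jumpMap_self] using this

lemma Hdist_jumpMap_left_le (W : ℕ → ℕ → ℝ) (i : ℕ) {x y : ℕ → ℝ} (hy : ∀ j, 0 ≤ y j)
    (hH : Summable fun j : ℕ => ((2 : ℝ) ^ j)⁻¹ * |x j - y j|)
    (hΔ : Summable fun j : ℕ => ((2 : ℝ) ^ j)⁻¹ * |jumpMap W i x j - y j|)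
    (hW : Summable fun j : {j : ℕ // j ≠ i} => ((2 : ℝ) ^ (j.1 : ℕ))⁻¹ * |W i j.1|) :
    Hdist (jumpMap W i x) y ≤ Hdist x y - ((2 : ℝ) ^ i)⁻¹ * |x i - y i| + ((2 : ℝ) ^ i)⁻¹ * y i
      + ∑' j : {j : ℕ // j ≠ i}, ((2 : ℝ) ^ (j.1 : ℕ))⁻¹ * |W i j.1| := by
  set w : ℕ → ℝ := {j | j ≠ i}.indicator fun j => ((2 : ℝ) ^ j)⁻¹ * |W i j|
  have hw : Summable w := summable_subtype_iff_indicator.mp hW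
  have := tsum_le_tsum_sub_add_of_forall_ne i hΔ (hH.add hw) fun j hj => by
    have hwj : w j = ((2 : ℝ) ^ j)⁻¹ * |W i j| := Set.indicator_of_mem hj _
    rw [jumpMap_of_ne W x hj, hwj, ← mul_add]
    gcongr _ * ?_
    exact abs_max_add_zero_sub_le (hy j)
  have hwi : w i = 0 := Set.indicator_of_notMem (by simp) _
  have hw_tsum : ∑' j, w j = ∑' j : {j : ℕ // j ≠ i}, ((2 : ℝ) ^ (j.1 : ℕ))⁻¹ * |W i j.1| :=
    (tsum_subtype _ _).symm
  rw [hH.tsum_add hw, hw_tsum, hwi, jumpMap_self, zero_sub, abs_neg, abs_of_nonneg (hy i)] at this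
  unfold Hdist
  linarith

lemma sign_drift_le (g : ℝ → ℝ) {s t : ℝ} (hst : s ≤ t) (hg : 0 ≤ g s) :
    (if s < t then (1 : ℝ) else -1) * g s + (if t < s then (1 : ℝ) else -1) * g t ≤ g s - g t := by
  rcases hst.lt_or_eq with h | rfl
  · simp [h, h.not_gt, sub_eq_add_neg]
  · simp only [lt_irrefl, if_false]
    linarith

lemma drift_add_jumps_le {p c a δ k s t φs φt gs gt E F : ℝ} (hp : 0 ≤ p) (hc : 0 ≤ c)
    (hδ : 0 ≤ δ) (hδa : p * δ ≤ p * a - c) (hφs : 0 ≤ φs) (hφ : φs ≤ φt)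
    (hE : E ≤ -(p * (t - s))) (hF : F ≤ p * s - p * (t - s) + c)
    (hW2 : φt - φs ≤ gt - gs) (hW3 : k * (t - s) ≤ gt - gs) (hW4 : s * (φt - φs) ≤ φt * (t - s)) :
    a * p * (gs - gt) + φs * E + (φt - φs) * F ≤ -(k * δ) * (p * (t - s)) := by
  have hφ' : 0 ≤ φt - φs := sub_nonneg.2 hφ
  calc a * p * (gs - gt) + φs * E + (φt - φs) * F
      ≤ a * p * (gs - gt) + φs * -(p * (t - s)) + (φt - φs) * (p * s - p * (t - s) + c) := by
        gcongr
    _ = (φt - φs) * c - a * p * (gt - gs) - p * (φt * (t - s) - s * (φt - φs)) := by ring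
    _ ≤ (gt - gs) * c - a * p * (gt - gs) := by
        linarith [mul_le_mul_of_nonneg_right hW2 hc, mul_nonneg hp (sub_nonneg.2 hW4)]
    _ = -((gt - gs) * (p * a - c)) := by ring
    _ ≤ -((gt - gs) * (p * δ)) := neg_le_neg (mul_le_mul_of_nonneg_left hδa (hφ'.trans hW2))
    _ ≤ -(k * (t - s) * (p * δ)) := neg_le_neg (mul_le_mul_of_nonneg_right hW3 (mul_nonneg hp hδ))
    _ = -(k * δ) * (p * (t - s)) := by ring

/-- The `i`-th summand of the coupling generator `𝓛₂` applied to `H` at `(x, y)`. -/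
noncomputable def generatorSummand (W : ℕ → ℕ → ℝ) (φ : ℕ → ℝ → ℝ) (g : ℝ → ℝ) (a : ℕ → ℝ)
    (x y : ℕ → ℝ) (i : ℕ) : ℝ :=
  a i * ((2 : ℝ) ^ i)⁻¹ *
      ((if x i < y i then (1 : ℝ) else -1) * g (x i) + (if y i < x i then (1 : ℝ) else -1) * g (y i))
    + min (φ i (x i)) (φ i (y i)) * (Hdist (jumpMap W i x) (jumpMap W i y) - Hdist x y)
    + max (φ i (x i) - φ i (y i)) 0 * (Hdist (jumpMap W i x) y - Hdist x y)
    + max (φ i (y i) - φ i (x i)) 0 * (Hdist x (jumpMap W i y) - Hdist x y)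

lemma generatorSummand_comm (W : ℕ → ℕ → ℝ) (φ : ℕ → ℝ → ℝ) (g : ℝ → ℝ) (a : ℕ → ℝ)
    (x y : ℕ → ℝ) (i : ℕ) : generatorSummand W φ g a x y i = generatorSummand W φ g a y x i := by
  simp only [generatorSummand, Hdist_comm y x, Hdist_comm (jumpMap W i y) (jumpMap W i x),
    Hdist_comm (jumpMap W i y) x, Hdist_comm y (jumpMap W i x), min_comm (φ i (x i))]
  ring

section

variable {W : ℕ → ℕ → ℝ} {φ : ℕ → ℝ → ℝ} {g : ℝ → ℝ} {k₁ δ c : ℝ} {a : ℕ → ℝ}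

lemma generatorSummand_le_of_le
    (hφ_nonneg : ∀ i t, 0 ≤ t → 0 ≤ φ i t) (hφ_mono : ∀ i, MonotoneOn (φ i) (Set.Ici 0))
    (hg_nonneg : ∀ t, 0 ≤ t → 0 ≤ g t)
    (hW2 : ∀ i s t, 0 ≤ s → s ≤ t → φ i t - φ i s ≤ g t - g s)
    (hW3 : ∀ s t, 0 ≤ s → s ≤ t → k₁ * (t - s) ≤ g t - g s)
    (hW4 : ∀ i s t, 0 ≤ s → s ≤ t → s * (φ i t - φ i s) ≤ φ i t * (t - s))
    {x y : ℕ → ℝ} {i : ℕ} (hx : ∀ j, 0 ≤ x j) (hy : ∀ j, 0 ≤ y j) (hxy : x i ≤ y i)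
    (hH : Summable fun j : ℕ => ((2 : ℝ) ^ j)⁻¹ * |x j - y j|)
    (hΔΔ : Summable fun j : ℕ => ((2 : ℝ) ^ j)⁻¹ * |jumpMap W i x j - jumpMap W i y j|)
    (hΔyx : Summable fun j : ℕ => ((2 : ℝ) ^ j)⁻¹ * |jumpMap W i y j - x j|)
    (hW : Summable fun j : {j : ℕ // j ≠ i} => ((2 : ℝ) ^ (j.1 : ℕ))⁻¹ * |W i j.1|)
    (hc : c = ∑' j : {j : ℕ // j ≠ i}, ((2 : ℝ) ^ (j.1 : ℕ))⁻¹ * |W i j.1|)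
    (hδ : 0 ≤ δ) (hδa : δ ≤ a i - 2 ^ i * c) :
    generatorSummand W φ g a x y i ≤ -(k₁ * δ) * (((2 : ℝ) ^ i)⁻¹ * |x i - y i|) := by
  set p : ℝ := ((2 : ℝ) ^ i)⁻¹
  have hp : 0 < p := by positivity
  have hc0 : 0 ≤ c := hc ▸ tsum_nonneg fun _ => by positivity
  have hpδ : p * δ ≤ p * a i - c := by
    have := mul_le_mul_of_nonneg_left hδa hp.le
    rwa [mul_sub, ← mul_assoc, inv_mul_cancel₀ (by positivity), one_mul] at this
  have habs : |x i - y i| = y i - x i := by rw [abs_sub_comm, abs_of_nonneg (sub_nonneg.2 hxy)]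
  have hφ : φ i (x i) ≤ φ i (y i) := hφ_mono i (hx i) (hy i) hxy
  have hE : Hdist (jumpMap W i x) (jumpMap W i y) - Hdist x y ≤ -(p * (y i - x i)) := by
    have := Hdist_jumpMap_jumpMap_le W i hH hΔΔ
    rw [habs] at this
    linarith
  have hF : Hdist x (jumpMap W i y) - Hdist x y ≤ p * x i - p * (y i - x i) + c := by
    have := Hdist_jumpMap_left_le W i hx (hH.congr fun j => by rw [abs_sub_comm]) hΔyx hW
    rw [Hdist_comm (jumpMap W i y), Hdist_comm y, ← hc, abs_sub_comm, habs] at this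
    linarith
  have hap : 0 ≤ a i * p := by linarith [mul_nonneg hp.le hδ]
  have hdrift := mul_le_mul_of_nonneg_left (sign_drift_le g hxy (hg_nonneg _ (hx i))) hap
  have key := drift_add_jumps_le hp.le hc0 hδ hpδ (hφ_nonneg i _ (hx i)) hφ hE hF
    (hW2 i _ _ (hx i) hxy) (hW3 _ _ (hx i) hxy) (hW4 i _ _ (hx i) hxy)
  rw [generatorSummand, min_eq_left hφ, max_eq_right (sub_nonpos.2 hφ),
    max_eq_left (sub_nonneg.2 hφ), habs, zero_mul, add_zero]
  linarith

lemma generatorSummand_le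
    (hφ_nonneg : ∀ i t, 0 ≤ t → 0 ≤ φ i t) (hφ_mono : ∀ i, MonotoneOn (φ i) (Set.Ici 0))
    (hg_nonneg : ∀ t, 0 ≤ t → 0 ≤ g t)
    (hW2 : ∀ i s t, 0 ≤ s → s ≤ t → φ i t - φ i s ≤ g t - g s)
    (hW3 : ∀ s t, 0 ≤ s → s ≤ t → k₁ * (t - s) ≤ g t - g s)
    (hW4 : ∀ i s t, 0 ≤ s → s ≤ t → s * (φ i t - φ i s) ≤ φ i t * (t - s))
    {x y : ℕ → ℝ} {i : ℕ} (hx : ∀ j, 0 ≤ x j) (hy : ∀ j, 0 ≤ y j)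
    (hH : Summable fun j : ℕ => ((2 : ℝ) ^ j)⁻¹ * |x j - y j|)
    (hΔΔ : Summable fun j : ℕ => ((2 : ℝ) ^ j)⁻¹ * |jumpMap W i x j - jumpMap W i y j|)
    (hΔy : Summable fun j : ℕ => ((2 : ℝ) ^ j)⁻¹ * |jumpMap W i x j - y j|)
    (hxΔ : Summable fun j : ℕ => ((2 : ℝ) ^ j)⁻¹ * |x j - jumpMap W i y j|)
    (hW : Summable fun j : {j : ℕ // j ≠ i} => ((2 : ℝ) ^ (j.1 : ℕ))⁻¹ * |W i j.1|)
    (hc : c = ∑' j : {j : ℕ // j ≠ i}, ((2 : ℝ) ^ (j.1 : ℕ))⁻¹ * |W i j.1|)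
    (hδ : 0 ≤ δ) (hδa : δ ≤ a i - 2 ^ i * c) :
    generatorSummand W φ g a x y i ≤ -(k₁ * δ) * (((2 : ℝ) ^ i)⁻¹ * |x i - y i|) := by
  rcases le_total (x i) (y i) with hxy | hyx
  · exact generatorSummand_le_of_le hφ_nonneg hφ_mono hg_nonneg hW2 hW3 hW4 hx hy hxy hH hΔΔ
      (hxΔ.congr fun j => by rw [abs_sub_comm]) hW hc hδ hδa
  · rw [generatorSummand_comm, abs_sub_comm]
    exact generatorSummand_le_of_le hφ_nonneg hφ_mono hg_nonneg hW2 hW3 hW4 hy hx hyx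
      (hH.congr fun j => by rw [abs_sub_comm]) (hΔΔ.congr fun j => by rw [abs_sub_comm]) hΔy
      hW hc hδ hδa

end

theorem coupling_generator_contraction_general
    (W : ℕ → ℕ → ℝ) (φ : ℕ → ℝ → ℝ) (g : ℝ → ℝ) (k₁ : ℝ) (a c : ℕ → ℝ) (δ : ℝ)
    (hφ_nonneg : ∀ i t, 0 ≤ t → 0 ≤ φ i t)
    (hφ_mono : ∀ i, MonotoneOn (φ i) (Set.Ici 0))
    (hg_nonneg : ∀ t, 0 ≤ t → 0 ≤ g t)
    (hW2 : ∀ i s t, 0 ≤ s → s ≤ t → φ i t - φ i s ≤ g t - g s)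
    (hW3 : ∀ s t, 0 ≤ s → s ≤ t → k₁ * (t - s) ≤ g t - g s)
    (hW4 : ∀ i s t, 0 ≤ s → s ≤ t → s * (φ i t - φ i s) ≤ φ i t * (t - s))
    (hc_sum : ∀ i, Summable (fun j : {j : ℕ // j ≠ i} => ((2 : ℝ) ^ (j.1 : ℕ))⁻¹ * |W i j.1|))
    (hc : ∀ i, c i = ∑' j : {j : ℕ // j ≠ i}, ((2 : ℝ) ^ (j.1 : ℕ))⁻¹ * |W i j.1|)
    (hδ : δ = ⨅ i : ℕ, (a i - 2 ^ i * c i))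
    (hδ_pos : 0 < δ) :
    ∀ x y : ℕ → ℝ, (∀ i, 0 ≤ x i) → (∀ i, 0 ≤ y i) →
      Summable (fun i : ℕ => ((2 : ℝ) ^ i)⁻¹ * |x i - y i|) →
      (∀ i, Summable (fun j : ℕ => ((2 : ℝ) ^ j)⁻¹ * |jumpMap W i x j - jumpMap W i y j|)) →
      (∀ i, Summable (fun j : ℕ => ((2 : ℝ) ^ j)⁻¹ * |jumpMap W i x j - y j|)) →
      (∀ i, Summable (fun j : ℕ => ((2 : ℝ) ^ j)⁻¹ * |x j - jumpMap W i y j|)) →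
      Summable (fun i : ℕ =>
        |a i * ((2 : ℝ) ^ i)⁻¹ *
          ((if x i < y i then (1 : ℝ) else -1) * g (x i) +
           (if y i < x i then (1 : ℝ) else -1) * g (y i))|) →
      Summable (fun i : ℕ =>
        |min (φ i (x i)) (φ i (y i)) * (Hdist (jumpMap W i x) (jumpMap W i y) - Hdist x y)|) →
      Summable (fun i : ℕ =>
        |max (φ i (x i) - φ i (y i)) 0 * (Hdist (jumpMap W i x) y - Hdist x y)|) →
      Summable (fun i : ℕ =>
        |max (φ i (y i) - φ i (x i)) 0 * (Hdist x (jumpMap W i y) - Hdist x y)|) →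
      (∑' i : ℕ, a i * ((2 : ℝ) ^ i)⁻¹ *
          ((if x i < y i then (1 : ℝ) else -1) * g (x i) +
           (if y i < x i then (1 : ℝ) else -1) * g (y i)))
      + (∑' i : ℕ, min (φ i (x i)) (φ i (y i)) *
          (Hdist (jumpMap W i x) (jumpMap W i y) - Hdist x y))
      + (∑' i : ℕ, max (φ i (x i) - φ i (y i)) 0 *
          (Hdist (jumpMap W i x) y - Hdist x y))
      + (∑' i : ℕ, max (φ i (y i) - φ i (x i)) 0 *
          (Hdist x (jumpMap W i y) - Hdist x y))
      ≤ -(k₁ * δ) * Hdist x y := by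
  intro x y hx hy hH hΔΔ hΔy hxΔ h₁ h₂ h₃ h₄
  have hbdd : BddBelow (Set.range fun i => a i - 2 ^ i * c i) := by
    -- otherwise `⨅` takes the junk value `0`
    by_contra h
    rw [Real.iInf_of_not_bddBelow h] at hδ
    exact hδ_pos.ne' hδ
  have hsum := ((h₁.of_abs.add h₂.of_abs).add h₃.of_abs).add h₄.of_abs
  rw [← h₁.of_abs.tsum_add h₂.of_abs, ← (h₁.of_abs.add h₂.of_abs).tsum_add h₃.of_abs,
    ← ((h₁.of_abs.add h₂.of_abs).add h₃.of_abs).tsum_add h₄.of_abs, Hdist, ← tsum_mul_left]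
  exact hsum.tsum_le_tsum (fun i => generatorSummand_le hφ_nonneg hφ_mono hg_nonneg hW2 hW3 hW4
    hx hy hH (hΔΔ i) (hΔy i) (hxΔ i) (hc_sum i) (hc i) hδ_pos.le (hδ ▸ ciInf_le hbdd i))
    (hH.mul_left _)

theorem coupling_generator_contraction
    (W : ℕ → ℕ → ℝ) (φ : ℕ → ℝ → ℝ) (g : ℝ → ℝ) (k₁ : ℝ) (a c : ℕ → ℝ) (δ : ℝ)
    (hφ_nonneg : ∀ i t, 0 ≤ t → 0 ≤ φ i t)
    (hφ_mono : ∀ i, MonotoneOn (φ i) (Set.Ici 0))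
    (hg_nonneg : ∀ t, 0 ≤ t → 0 ≤ g t)
    (hk₁ : 0 < k₁)
    (ha : ∀ i, 0 ≤ a i)
    (hW2 : ∀ i s t, 0 ≤ s → s ≤ t → φ i t - φ i s ≤ g t - g s)
    (hW3 : ∀ s t, 0 ≤ s → s ≤ t → k₁ * (t - s) ≤ g t - g s)
    (hW4 : ∀ i s t, 0 ≤ s → s ≤ t → s * (φ i t - φ i s) ≤ φ i t * (t - s))
    (hc_sum : ∀ i, Summable (fun j : {j : ℕ // j ≠ i} => ((2 : ℝ) ^ (j.1 : ℕ))⁻¹ * |W i j.1|))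
    (hc : ∀ i, c i = ∑' j : {j : ℕ // j ≠ i}, ((2 : ℝ) ^ (j.1 : ℕ))⁻¹ * |W i j.1|)
    (hδ : δ = ⨅ i : ℕ, (a i - 2 ^ i * c i))
    (hδ_pos : 0 < δ) :
    ∀ x y : ℕ → ℝ, (∀ i, 0 ≤ x i) → (∀ i, 0 ≤ y i) →
      Summable (fun i : ℕ => ((2 : ℝ) ^ i)⁻¹ * |x i - y i|) →
      (∀ i, Summable (fun j : ℕ => ((2 : ℝ) ^ j)⁻¹ * |jumpMap W i x j - jumpMap W i y j|)) →
      (∀ i, Summable (fun j : ℕ => ((2 : ℝ) ^ j)⁻¹ * |jumpMap W i x j - y j|)) →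
      (∀ i, Summable (fun j : ℕ => ((2 : ℝ) ^ j)⁻¹ * |x j - jumpMap W i y j|)) →
      Summable (fun i : ℕ =>
        |a i * ((2 : ℝ) ^ i)⁻¹ *
          ((if x i < y i then (1 : ℝ) else -1) * g (x i) +
           (if y i < x i then (1 : ℝ) else -1) * g (y i))|) →
      Summable (fun i : ℕ =>
        |min (φ i (x i)) (φ i (y i)) * (Hdist (jumpMap W i x) (jumpMap W i y) - Hdist x y)|) →
      Summable (fun i : ℕ =>
        |max (φ i (x i) - φ i (y i)) 0 * (Hdist (jumpMap W i x) y - Hdist x y)|) →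
      Summable (fun i : ℕ =>
        |max (φ i (y i) - φ i (x i)) 0 * (Hdist x (jumpMap W i y) - Hdist x y)|) →
      (∑' i : ℕ, a i * ((2 : ℝ) ^ i)⁻¹ *
          ((if x i < y i then (1 : ℝ) else -1) * g (x i) +
           (if y i < x i then (1 : ℝ) else -1) * g (y i)))
      + (∑' i : ℕ, min (φ i (x i)) (φ i (y i)) *
          (Hdist (jumpMap W i x) (jumpMap W i y) - Hdist x y))
      + (∑' i : ℕ, max (φ i (x i) - φ i (y i)) 0 *
          (Hdist (jumpMap W i x) y - Hdist x y))
      + (∑' i : ℕ, max (φ i (y i) - φ i (x i)) 0 *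
          (Hdist x (jumpMap W i y) - Hdist x y))
      ≤ -(k₁ * δ) * Hdist x y :=
  coupling_generator_contraction_general W φ g k₁ a c δ hφ_nonneg hφ_mono hg_nonneg hW2 hW3 hW4
    hc_sum hc hδ hδ_pos
end

section
/- Let K be a finite set, M ≥ 1 an integer and u > 0. For each i ∈ K let a_i ≥ 0, r_i ≥ 0, s_i ∈ ℝ, and let φ_i : [0,∞) → [0,∞) be continuous, nondecreasing, unbounded and of polynomial order (there exist C_i > 0, p_i > 0 with φ_i(t) ≤ C_i·(1+t)^{p_i} for all t ≥ 0). For x ∈ [0,∞)^{K×{1,…,M}} define V(x) = exp(u·∑_{i∈K}∑_{m=1}^M x_{m,i}) and G(x) = −u·∑_{i∈K}∑_{m=1}^M a_i·x_{m,i}·V(x) + ∑_{i∈K}∑_{m=1}^M φ_i(x_{m,i})·(e^{u·(r_i − x_{m,i} + s_i)} − 1)·V(x). Then there exist constants c > 0, d > 0 and a compact set R ⊆ [0,∞)^{K×{1,…,M}} such that G(x) ≤ −c·V(x) + d·𝟙_R(x) for all x ∈ [0,∞)^{K×{1,…,M}}. -/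
/-!
Off a large box some replica coordinate `x q` is large, and then its jump term
`φ (x q) * (exp (u * (r + s - x q)) - 1)` is close to `-φ (x q)`, which tends to `-∞`
because `φ` is monotone and unbounded; it therefore outweighs the other jump terms, which
are bounded above, while the leak term `-u ∑ a x` is never positive. Inside the box the
continuous function `V` is bounded.
-/

open Filter Set Real

/-- When `y ≤ c` the rate is at most `φ (max c 0)` by monotonicity; when `c < y` the jump
lowers `V`, so the term is nonpositive. -/
lemma mul_exp_sub_sub_one_le_of_monotoneOn {φ : ℝ → ℝ} {u c y : ℝ}
    (hφ_nonneg : ∀ t, 0 ≤ t → 0 ≤ φ t) (hφ_mono : MonotoneOn φ (Ici 0))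
    (hu : 0 ≤ u) (hy : 0 ≤ y) :
    φ y * (exp (u * (c - y)) - 1) ≤ φ (max c 0) * exp (u * c) := by
  have hφc : 0 ≤ φ (max c 0) := hφ_nonneg _ (le_max_right c 0)
  rcases le_or_gt y c with hyc | hcy
  · have hrate : φ y ≤ φ (max c 0) :=
      hφ_mono hy (le_max_right c 0) (hyc.trans (le_max_left c 0))
    have hjump : exp (u * (c - y)) - 1 ≤ exp (u * c) := by
      have := exp_le_exp.2 (by nlinarith : u * (c - y) ≤ u * c)
      linarith
    have hjump_nonneg : 0 ≤ exp (u * (c - y)) - 1 := by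
      simpa using one_le_exp (mul_nonneg hu (sub_nonneg.2 hyc))
    exact mul_le_mul hrate hjump hjump_nonneg hφc
  · have hjump : exp (u * (c - y)) - 1 ≤ 0 := by
      simpa using exp_le_one_iff.2 (mul_nonpos_of_nonneg_of_nonpos hu (by linarith))
    exact (mul_nonpos_of_nonneg_of_nonpos (hφ_nonneg y hy) hjump).trans
      (mul_nonneg hφc (exp_pos _).le)

lemma tendsto_mul_exp_sub_sub_one_atBot {φ : ℝ → ℝ} {u c : ℝ}
    (hφ_mono : MonotoneOn φ (Ici 0)) (hφ_unbdd : ∀ B, ∃ t, 0 ≤ t ∧ B ≤ φ t) (hu : 0 < u) :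
    Tendsto (fun y => φ y * (exp (u * (c - y)) - 1)) atTop atBot := by
  have hφ : Tendsto φ atTop atTop := tendsto_atTop_atTop.2 fun B => by
    obtain ⟨t, ht, hB⟩ := hφ_unbdd B
    exact ⟨t, fun y hy => hB.trans (hφ_mono ht (ht.trans hy) hy)⟩
  have hexp : Tendsto (fun y => exp (u * (c - y))) atTop (nhds 0) :=
    tendsto_exp_atBot.comp
      ((tendsto_atBot_add_const_left _ c tendsto_neg_atTop_atBot).const_mul_atBot hu)
  simpa using hφ.atTop_mul_neg (by norm_num) (hexp.sub_const 1)

lemma exists_sum_le_neg_one_add_indicator_of_tendsto_atBot {ι : Type*} [Fintype ι]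
    {f : ι → ℝ → ℝ} (hbdd : ∀ q, ∃ B, ∀ y, 0 ≤ y → f q y ≤ B)
    (htend : ∀ q, Tendsto (f q) atTop atBot) :
    ∃ B > 0, ∃ T, ∀ x : ι → ℝ, (∀ q, 0 ≤ x q) →
      ∑ q, f q (x q) ≤ -1 + (univ.pi fun _ => Icc 0 T).indicator (fun _ => B) x := by
  classical
  choose b hb using hbdd
  set B₀ := ∑ q, max (b q) 0
  have hB₀ : 0 ≤ B₀ := Finset.sum_nonneg fun q _ => le_max_right _ _
  have hsum_le : ∀ x : ι → ℝ, (∀ q, 0 ≤ x q) → ∀ s : Finset ι,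
      ∑ q ∈ s, f q (x q) ≤ B₀ := fun x hx s =>
    calc ∑ q ∈ s, f q (x q) ≤ ∑ q ∈ s, max (b q) 0 :=
          Finset.sum_le_sum fun q _ => (hb q _ (hx q)).trans (le_max_left _ _)
      _ ≤ B₀ := Finset.sum_le_sum_of_subset_of_nonneg (Finset.subset_univ s)
          fun q _ _ => le_max_right _ _
  have hlarge : ∀ q, ∃ T, ∀ y, T ≤ y → f q y ≤ -(B₀ + 1) := fun q =>
    eventually_atTop.1 ((htend q).eventually_le_atBot _)
  choose T₀ hT₀ using hlarge
  obtain ⟨T, hT⟩ := Finite.exists_le T₀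
  refine ⟨B₀ + 1, by linarith, T, fun x hx => ?_⟩
  by_cases hbox : x ∈ univ.pi fun _ => Icc 0 T
  · rw [indicator_of_mem hbox]
    linarith [hsum_le x hx Finset.univ]
  · rw [indicator_of_notMem hbox]
    obtain ⟨q₀, hq₀⟩ : ∃ q₀, T < x q₀ := by
      by_contra! h
      exact hbox fun q _ => ⟨hx q, h q⟩
    rw [← Finset.add_sum_erase _ _ (Finset.mem_univ q₀)]
    linarith [hT₀ q₀ (x q₀) ((hT q₀).trans hq₀.le), hsum_le x hx (Finset.univ.erase q₀)]

lemma exists_mul_le_neg_add_indicator_of_isCompact {E : Type*} [TopologicalSpace E]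
    {S W : E → ℝ} {R : Set E} {B : ℝ} (hR : IsCompact R) (hW : ContinuousOn W R) (hB : 0 < B) :
    ∃ d > 0, ∀ x, 0 ≤ W x → S x ≤ -1 + R.indicator (fun _ => B) x →
      S x * W x ≤ -W x + R.indicator (fun _ => d) x := by
  obtain ⟨C, hC⟩ := hR.exists_bound_of_continuousOn hW
  refine ⟨B * max C 1, mul_pos hB (lt_max_of_lt_right one_pos), fun x hW0 hS => ?_⟩
  by_cases hx : x ∈ R
  · rw [indicator_of_mem hx] at hS ⊢
    have hWC : W x ≤ max C 1 := (le_abs_self _).trans ((hC x hx).trans (le_max_left _ _))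
    nlinarith
  · rw [indicator_of_notMem hx] at hS ⊢
    nlinarith

theorem replica_generator_foster_lyapunov_general
    (K : Finset ℕ) (M : ℕ) (u : ℝ) (hu : 0 < u)
    (a r s : ℕ → ℝ) (φ : ℕ → ℝ → ℝ)
    (ha : ∀ i ∈ K, 0 ≤ a i)
    (hφ_nonneg : ∀ i ∈ K, ∀ t, 0 ≤ t → 0 ≤ φ i t)
    (hφ_mono : ∀ i ∈ K, MonotoneOn (φ i) (Set.Ici 0))
    (hφ_unbdd : ∀ i ∈ K, ∀ B : ℝ, ∃ t, 0 ≤ t ∧ B ≤ φ i t) :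
    ∃ c > (0 : ℝ), ∃ d > (0 : ℝ), ∃ R : Set ((↥K × Fin M) → ℝ),
      IsCompact R ∧
      ∀ x : (↥K × Fin M) → ℝ, (∀ q, 0 ≤ x q) →
        (-u * (∑ q : ↥K × Fin M, a q.1.1 * x q) *
            Real.exp (u * ∑ q : ↥K × Fin M, x q)
          + ∑ q : ↥K × Fin M, φ q.1.1 (x q) *
              (Real.exp (u * (r q.1.1 - x q + s q.1.1)) - 1) *
              Real.exp (u * ∑ q' : ↥K × Fin M, x q'))
        ≤ -c * Real.exp (u * ∑ q : ↥K × Fin M, x q)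
          + Set.indicator R (fun _ => d) x := by
  obtain ⟨B, hB, T, hjumps⟩ := exists_sum_le_neg_one_add_indicator_of_tendsto_atBot
    (f := fun (q : ↥K × Fin M) y => φ q.1.1 y * (exp (u * (r q.1.1 + s q.1.1 - y)) - 1))
    (fun q => ⟨_, fun y hy => mul_exp_sub_sub_one_le_of_monotoneOn
      (hφ_nonneg _ q.1.2) (hφ_mono _ q.1.2) hu.le hy⟩)
    (fun q => tendsto_mul_exp_sub_sub_one_atBot (hφ_mono _ q.1.2) (hφ_unbdd _ q.1.2) hu)
  have hR : IsCompact (univ.pi fun _ : ↥K × Fin M => Icc (0 : ℝ) T) :=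
    isCompact_univ_pi fun _ => isCompact_Icc
  obtain ⟨d, hd, hdrift⟩ := exists_mul_le_neg_add_indicator_of_isCompact hR
    (W := fun x => exp (u * ∑ q, x q)) (by fun_prop) hB
  refine ⟨1, one_pos, d, hd, _, hR, fun x hx => ?_⟩
  have hleak : 0 ≤ u * ∑ q : ↥K × Fin M, a q.1.1 * x q :=
    mul_nonneg hu.le (Finset.sum_nonneg fun q _ => mul_nonneg (ha _ q.1.2) (hx q))
  have hV := exp_pos (u * ∑ q, x q)
  have hbound := hdrift x hV.le (hjumps x hx)
  simp only [← Finset.sum_mul, sub_add_eq_add_sub] at hbound ⊢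
  nlinarith

theorem replica_generator_foster_lyapunov
    (K : Finset ℕ) (M : ℕ) (hM : 1 ≤ M) (u : ℝ) (hu : 0 < u)
    (a r s : ℕ → ℝ) (φ : ℕ → ℝ → ℝ)
    (ha : ∀ i ∈ K, 0 ≤ a i)
    (hr : ∀ i ∈ K, 0 ≤ r i)
    (hφ_cont : ∀ i ∈ K, ContinuousOn (φ i) (Set.Ici 0))
    (hφ_nonneg : ∀ i ∈ K, ∀ t, 0 ≤ t → 0 ≤ φ i t)
    (hφ_mono : ∀ i ∈ K, MonotoneOn (φ i) (Set.Ici 0))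
    (hφ_unbdd : ∀ i ∈ K, ∀ B : ℝ, ∃ t, 0 ≤ t ∧ B ≤ φ i t)
    (hφ_poly : ∀ i ∈ K, ∃ C > (0 : ℝ), ∃ p > (0 : ℝ),
      ∀ t, 0 ≤ t → φ i t ≤ C * (1 + t) ^ p) :
    ∃ c > (0 : ℝ), ∃ d > (0 : ℝ), ∃ R : Set ((↥K × Fin M) → ℝ),
      IsCompact R ∧
      ∀ x : (↥K × Fin M) → ℝ, (∀ q, 0 ≤ x q) →
        (-u * (∑ q : ↥K × Fin M, a q.1.1 * x q) *
            Real.exp (u * ∑ q : ↥K × Fin M, x q)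
          + ∑ q : ↥K × Fin M, φ q.1.1 (x q) *
              (Real.exp (u * (r q.1.1 - x q + s q.1.1)) - 1) *
              Real.exp (u * ∑ q' : ↥K × Fin M, x q'))
        ≤ -c * Real.exp (u * ∑ q : ↥K × Fin M, x q)
          + Set.indicator R (fun _ => d) x :=
  replica_generator_foster_lyapunov_general K M u hu a r s φ ha hφ_nonneg hφ_mono hφ_unbdd
end

section
/- Let τ > 0 and let f, g : [−τ, ∞) → ℝ be continuous with f(−τ) > 0. Define, for u > −τ, Λ(u) = ∫_{−τ}^{u} exp(−∫_{v}^{u} f(ω)/(1 + ω/τ) dω) · g(v)/(1 + v/τ) dv. Then for every u > −τ this integral converges absolutely, Λ is differentiable on (−τ, ∞) and satisfies the ODE (1 + u/τ)·Λ'(u) + f(u)·Λ(u) − g(u) = 0 for all u > −τ, and Λ extends to a continuous function on [−τ, ∞) with Λ(−τ) = g(−τ)/f(−τ). -/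
open MeasureTheory

/- STATEMENT 9: existence part of Proposition 5.2 of Baccelli–Taillefumier:
the integral formula Λ(u) = ∫_{−τ}^{u} e^{−∫_v^u f(ω)/(1+ω/τ) dω} · g(v)/(1+v/τ) dv
solves the singular ODE (1+u/τ)Λ' + fΛ − g = 0 on (−τ,∞) and extends
continuously to [−τ,∞) with value g(−τ)/f(−τ) at −τ. -/

/-- The candidate solution of the ODE. -/
noncomputable def lamBT (τ : ℝ) (f g : ℝ → ℝ) (u : ℝ) : ℝ :=
  ∫ v in (-τ)..u, Real.exp (-(∫ ω in v..u, f ω / (1 + ω / τ))) * (g v / (1 + v / τ))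

namespace BTaux

open Set Filter

variable {τ : ℝ} {f g : ℝ → ℝ}

lemma hden (hτ : 0 < τ) {x : ℝ} (hx : -τ < x) : 0 < 1 + x / τ := by
  have h2 : 1 + x / τ = (τ + x) / τ := by field_simp
  rw [h2]
  have h1 : 0 < τ + x := by linarith
  positivity

lemma uIcc_sub {a b : ℝ} (ha : -τ < a) (hb : -τ < b) :
    Set.uIcc a b ⊆ Set.Ioi (-τ) := by
  intro x hx
  rw [Set.mem_uIcc] at hx
  rcases hx with ⟨h1, h2⟩ | ⟨h1, h2⟩ <;> simp only [Set.mem_Ioi] <;> linarith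

lemma cont_fh (hτ : 0 < τ) (hf : ContinuousOn f (Set.Ici (-τ))) :
    ContinuousOn (fun ω => f ω / (1 + ω / τ)) (Set.Ioi (-τ)) :=
  ContinuousOn.div (hf.mono Set.Ioi_subset_Ici_self)
    (Continuous.continuousOn (by fun_prop))
    (fun x hx => (hden hτ hx).ne')

lemma intg_fh (hτ : 0 < τ) (hf : ContinuousOn f (Set.Ici (-τ)))
    {a b : ℝ} (ha : -τ < a) (hb : -τ < b) :
    IntervalIntegrable (fun ω => f ω / (1 + ω / τ)) volume a b :=
  ((cont_fh hτ hf).mono (uIcc_sub ha hb)).intervalIntegrable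

/-- antiderivative of f/(1+·/τ) based at 0. -/
noncomputable def Fbt (τ : ℝ) (f : ℝ → ℝ) (x : ℝ) : ℝ :=
  ∫ ω in (0:ℝ)..x, f ω / (1 + ω / τ)

lemma F_deriv (hτ : 0 < τ) (hf : ContinuousOn f (Set.Ici (-τ))) {x : ℝ} (hx : -τ < x) :
    HasDerivAt (Fbt τ f) (f x / (1 + x / τ)) x := by
  exact intervalIntegral.integral_hasDerivAt_right
    (intg_fh hτ hf (by linarith) hx)
    ((cont_fh hτ hf).stronglyMeasurableAtFilter isOpen_Ioi x hx)
    ((cont_fh hτ hf).continuousAt (isOpen_Ioi.mem_nhds hx))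

lemma F_cont (hτ : 0 < τ) (hf : ContinuousOn f (Set.Ici (-τ))) :
    ContinuousOn (Fbt τ f) (Set.Ioi (-τ)) :=
  fun x hx => ((F_deriv hτ hf hx).continuousAt).continuousWithinAt

lemma F_sub (hτ : 0 < τ) (hf : ContinuousOn f (Set.Ici (-τ)))
    {v u : ℝ} (hv : -τ < v) (hu : -τ < u) :
    ∫ ω in v..u, f ω / (1 + ω / τ) = Fbt τ f u - Fbt τ f v :=
  (intervalIntegral.integral_interval_sub_left
    (intg_fh hτ hf (by linarith) hu) (intg_fh hτ hf (by linarith) hv)).symm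

lemma keybound (hτ : 0 < τ) (hf : ContinuousOn f (Set.Ici (-τ)))
    {α b : ℝ} (hα : 0 < α) (hfα : ∀ x ∈ Set.Ioc (-τ) b, α ≤ f x)
    {v w : ℝ} (hv : -τ < v) (hvw : v ≤ w) (hwb : w ≤ b) :
    Real.exp (Fbt τ f v - Fbt τ f w) ≤ ((τ + v) / (τ + w)) ^ (α * τ) := by
  have hw : -τ < w := lt_of_lt_of_le hv hvw
  have hτv : 0 < τ + v := by linarith
  have hτw : 0 < τ + w := by linarith
  have hL : ∀ x ∈ Set.uIcc v w,
      HasDerivAt (fun y => α * τ * Real.log (τ + y)) (α * τ / (τ + x)) x := by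
    intro x hx
    rw [Set.uIcc_of_le hvw] at hx
    have hx0 : 0 < τ + x := by have := hx.1; linarith
    have h1 : HasDerivAt (fun y : ℝ => τ + y) 1 x := (hasDerivAt_id x).const_add τ
    have h2 : HasDerivAt (fun y => Real.log (τ + y)) (1 / (τ + x)) x := by
      simpa [one_div, Function.comp_def] using (Real.hasDerivAt_log hx0.ne').comp x h1
    have := h2.const_mul (α * τ)
    simpa [mul_one_div, div_eq_mul_inv] using this
  have hint1 : IntervalIntegrable (fun x => α * τ / (τ + x)) volume v w := by
    apply ContinuousOn.intervalIntegrable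
    apply ContinuousOn.div continuousOn_const (Continuous.continuousOn (by fun_prop))
    intro x hx
    rw [Set.uIcc_of_le hvw] at hx
    have := hx.1
    have : 0 < τ + x := by linarith
    exact this.ne'
  have heq : ∫ x in v..w, α * τ / (τ + x)
      = α * τ * Real.log (τ + w) - α * τ * Real.log (τ + v) :=
    intervalIntegral.integral_eq_sub_of_hasDerivAt hL hint1
  have hmono : (∫ x in v..w, α * τ / (τ + x)) ≤ ∫ x in v..w, f x / (1 + x / τ) := by
    apply intervalIntegral.integral_mono_on hvw hint1 (intg_fh hτ hf hv hw)
    intro x hx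
    have hx1 : -τ < x := lt_of_lt_of_le hv hx.1
    have hfx : α ≤ f x := hfα x ⟨hx1, le_trans hx.2 hwb⟩
    have h0 : 0 < τ + x := by linarith
    have e1 : f x / (1 + x / τ) = f x * τ / (τ + x) := by
      rw [show (1:ℝ) + x / τ = (τ + x) / τ by field_simp, div_div_eq_mul_div]
    rw [e1]
    gcongr
  have hFw : Fbt τ f w - Fbt τ f v = ∫ x in v..w, f x / (1 + x / τ) :=
    (F_sub hτ hf hv hw).symm
  have hle : Fbt τ f v - Fbt τ f w
      ≤ α * τ * Real.log (τ + v) - α * τ * Real.log (τ + w) := by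
    have := heq ▸ hmono
    linarith [hFw ▸ this]
  calc Real.exp (Fbt τ f v - Fbt τ f w)
      ≤ Real.exp (α * τ * Real.log (τ + v) - α * τ * Real.log (τ + w)) :=
        Real.exp_le_exp.mpr hle
    _ = ((τ + v) / (τ + w)) ^ (α * τ) := by
        rw [Real.rpow_def_of_pos (div_pos hτv hτw), Real.log_div hτv.ne' hτw.ne']
        ring_nf

lemma phi_cont (hτ : 0 < τ) (hf : ContinuousOn f (Set.Ici (-τ)))
    {ψ : ℝ → ℝ} (hψ : ContinuousOn ψ (Set.Ici (-τ))) :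
    ContinuousOn (fun v => Real.exp (Fbt τ f v) * (ψ v / (1 + v / τ))) (Set.Ioi (-τ)) := by
  apply ContinuousOn.mul
  · exact Real.continuous_exp.comp_continuousOn (F_cont hτ hf)
  · exact ContinuousOn.div (hψ.mono Set.Ioi_subset_Ici_self)
      (Continuous.continuousOn (by fun_prop)) (fun x hx => (hden hτ hx).ne')

lemma phi_integrable (hτ : 0 < τ) (hf : ContinuousOn f (Set.Ici (-τ)))
    {ψ : ℝ → ℝ} (hψ : ContinuousOn ψ (Set.Ici (-τ)))
    {α b₀ : ℝ} (hα : 0 < α) (hb₀ : -τ < b₀) (hfα : ∀ x ∈ Set.Ioc (-τ) b₀, α ≤ f x)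
    {u : ℝ} (hu : -τ < u) :
    IntervalIntegrable (fun v => Real.exp (Fbt τ f v) * (ψ v / (1 + v / τ))) volume (-τ) u := by
  set φ := fun v => Real.exp (Fbt τ f v) * (ψ v / (1 + v / τ)) with hφdef
  set b := min b₀ u with hbdef
  have hb : -τ < b := lt_min hb₀ hu
  have hbb₀ : b ≤ b₀ := min_le_left _ _
  have hbu : b ≤ u := min_le_right _ _
  have hτb : 0 < τ + b := by linarith
  have h2 : IntervalIntegrable φ volume b u :=
    ((phi_cont hτ hf hψ).mono (uIcc_sub hb hu)).intervalIntegrable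
  obtain ⟨M, hM⟩ := (isCompact_Icc (a := -τ) (b := b)).exists_bound_of_continuousOn
    (hψ.mono Set.Icc_subset_Ici_self)
  set p := α * τ with hp
  have hppos : 0 < p := mul_pos hα hτ
  set C := Real.exp (Fbt τ f b) * (τ + b) ^ (-p) * M * τ with hC
  have hMaj : IntervalIntegrable (fun v => C * (τ + v) ^ (p - 1)) volume (-τ) b := by
    have h0 : IntervalIntegrable (fun x : ℝ => x ^ (p - 1)) volume 0 (b + τ) :=
      intervalIntegral.intervalIntegrable_rpow' (by linarith)
    have h1 := (h0.comp_add_right τ)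
    have h1' : IntervalIntegrable (fun x : ℝ => (x + τ) ^ (p - 1)) volume (-τ) b := by
      simpa using h1
    have := h1'.const_mul C
    simpa [add_comm] using this
  have h1 : IntervalIntegrable φ volume (-τ) b := by
    apply hMaj.mono_fun'
    · rw [Set.uIoc_of_le hb.le]
      exact ((phi_cont hτ hf hψ).mono Set.Ioc_subset_Ioi_self).aestronglyMeasurable
        measurableSet_Ioc
    · rw [Set.uIoc_of_le hb.le]
      filter_upwards [ae_restrict_mem measurableSet_Ioc] with v hv
      have hv1 : -τ < v := hv.1
      have hτv : 0 < τ + v := by linarith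
      have hden' : 0 < 1 + v / τ := hden hτ hv1
      have hkey : Real.exp (Fbt τ f v)
          ≤ ((τ + v) / (τ + b)) ^ p * Real.exp (Fbt τ f b) := by
        have := keybound hτ hf hα (fun x hx => hfα x ⟨hx.1, hx.2.trans hbb₀⟩)
          hv1 hv.2 (le_refl b)
        calc Real.exp (Fbt τ f v)
            = Real.exp (Fbt τ f v - Fbt τ f b) * Real.exp (Fbt τ f b) := by
              rw [← Real.exp_add]; ring_nf
          _ ≤ ((τ + v) / (τ + b)) ^ p * Real.exp (Fbt τ f b) := by
              apply mul_le_mul_of_nonneg_right this (Real.exp_pos _).le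
      have hMv : |ψ v| ≤ M := by
        have := hM v ⟨hv1.le, hv.2⟩
        simpa [Real.norm_eq_abs] using this
      have hM0 : 0 ≤ M := le_trans (abs_nonneg _) hMv
      calc ‖φ v‖ = Real.exp (Fbt τ f v) * (|ψ v| / (1 + v / τ)) := by
            rw [hφdef]
            rw [Real.norm_eq_abs, abs_mul, abs_of_pos (Real.exp_pos _), abs_div,
              abs_of_pos hden']
        _ ≤ (((τ + v) / (τ + b)) ^ p * Real.exp (Fbt τ f b)) * (M / (1 + v / τ)) := by
            exact mul_le_mul hkey ((div_le_div_iff_of_pos_right hden').mpr hMv)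
              (by positivity) (by positivity)
        _ = C * (τ + v) ^ (p - 1) := by
            rw [hC, Real.rpow_sub hτv, Real.rpow_one,
              Real.div_rpow hτv.le hτb.le, Real.rpow_neg hτb.le,
              show (1:ℝ) + v / τ = (τ + v) / τ by field_simp]
            have hbp : (0:ℝ) < (τ + b) ^ p := Real.rpow_pos_of_pos hτb p
            field_simp
  exact h1.trans h2

lemma lam_eq (hτ : 0 < τ) (hf : ContinuousOn f (Set.Ici (-τ)))
    {u : ℝ} (hu : -τ < u) :
    lamBT τ f g u = Real.exp (-(Fbt τ f u)) *
      ∫ v in (-τ)..u, Real.exp (Fbt τ f v) * (g v / (1 + v / τ)) := by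
  rw [lamBT, ← intervalIntegral.integral_const_mul]
  apply intervalIntegral.integral_congr_ae
  apply MeasureTheory.ae_of_all
  intro v hv
  rw [Set.uIoc_of_le hu.le] at hv
  rw [F_sub hτ hf hv.1 hu]
  rw [show -(Fbt τ f u - Fbt τ f v) = Fbt τ f v + -(Fbt τ f u) by ring, Real.exp_add]
  ring

lemma part1 (hτ : 0 < τ) (hf : ContinuousOn f (Set.Ici (-τ)))
    (hg : ContinuousOn g (Set.Ici (-τ)))
    {α b₀ : ℝ} (hα : 0 < α) (hb₀ : -τ < b₀) (hfα : ∀ x ∈ Set.Ioc (-τ) b₀, α ≤ f x)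
    {u : ℝ} (hu : -τ < u) :
    IntervalIntegrable
      (fun v => Real.exp (-(∫ ω in v..u, f ω / (1 + ω / τ))) * (g v / (1 + v / τ)))
      volume (-τ) u := by
  have hnice : IntervalIntegrable
      (fun v => Real.exp (-(Fbt τ f u)) * (Real.exp (Fbt τ f v) * (g v / (1 + v / τ))))
      volume (-τ) u :=
    (phi_integrable hτ hf hg hα hb₀ hfα hu).const_mul _
  have hmeq : ∀ᵐ v ∂(volume.restrict (Set.Ioc (-τ) u)),
      Real.exp (-(Fbt τ f u)) * (Real.exp (Fbt τ f v) * (g v / (1 + v / τ)))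
        = Real.exp (-(∫ ω in v..u, f ω / (1 + ω / τ))) * (g v / (1 + v / τ)) := by
    filter_upwards [ae_restrict_mem measurableSet_Ioc] with v hv
    rw [F_sub hτ hf hv.1 hu,
      show -(Fbt τ f u - Fbt τ f v) = Fbt τ f v + -(Fbt τ f u) by ring, Real.exp_add]
    ring
  apply hnice.mono_fun
  · rw [Set.uIoc_of_le hu.le]
    exact hnice.aestronglyMeasurable.congr hmeq
  · rw [Set.uIoc_of_le hu.le]
    filter_upwards [hmeq] with v hv
    rw [← hv]

lemma part2 (hτ : 0 < τ) (hf : ContinuousOn f (Set.Ici (-τ)))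
    (hg : ContinuousOn g (Set.Ici (-τ)))
    {α b₀ : ℝ} (hα : 0 < α) (hb₀ : -τ < b₀) (hfα : ∀ x ∈ Set.Ioc (-τ) b₀, α ≤ f x)
    {u : ℝ} (hu : -τ < u) :
    ∃ d : ℝ, HasDerivAt (lamBT τ f g) d u ∧
      (1 + u / τ) * d + f u * lamBT τ f g u - g u = 0 := by
  set φ := fun v => Real.exp (Fbt τ f v) * (g v / (1 + v / τ)) with hφdef
  set G := fun y => ∫ v in (-τ)..y, φ v with hGdef
  have hGd : HasDerivAt G (φ u) u :=
    intervalIntegral.integral_hasDerivAt_right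
      (phi_integrable hτ hf hg hα hb₀ hfα hu)
      ((phi_cont hτ hf hg).stronglyMeasurableAtFilter isOpen_Ioi u hu)
      ((phi_cont hτ hf hg).continuousAt (isOpen_Ioi.mem_nhds hu))
  have hFd : HasDerivAt (fun y => Real.exp (-(Fbt τ f y)))
      (Real.exp (-(Fbt τ f u)) * (-(f u / (1 + u / τ)))) u :=
    ((F_deriv hτ hf hu).neg).exp
  have hprod := hFd.mul hGd
  have hev : (fun y => Real.exp (-(Fbt τ f y)) * G y) =ᶠ[nhds u] lamBT τ f g := by
    filter_upwards [isOpen_Ioi.mem_nhds hu] with y hy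
    exact (lam_eq hτ hf hy).symm
  refine ⟨_, hprod.congr_of_eventuallyEq hev.symm, ?_⟩
  have hlam : lamBT τ f g u = Real.exp (-(Fbt τ f u)) * G u := lam_eq hτ hf hu
  rw [hlam, hφdef]
  have hh : (1 + u / τ) ≠ 0 := (hden hτ hu).ne'
  have hEE : Real.exp (-(Fbt τ f u)) * Real.exp (Fbt τ f u) = 1 := by
    rw [← Real.exp_add]; simp
  set E := Real.exp (-(Fbt τ f u)) with hE
  set E' := Real.exp (Fbt τ f u) with hE'
  set H := 1 + u / τ with hH
  have c1 : H * (E * -(f u / H) * G u) = -(f u * (E * G u)) := by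
    field_simp
  have c2 : H * (E * (E' * (g u / H))) = g u := by
    have : H * (E * (E' * (g u / H))) = (E * E') * (H * (g u / H)) := by ring
    rw [this, hEE, one_mul, mul_div_cancel₀ _ hh]
  rw [mul_add, c1, c2]
  ring

lemma W_int (hτ : 0 < τ) (hf : ContinuousOn f (Set.Ici (-τ)))
    {α b₀ : ℝ} (hα : 0 < α) (hb₀ : -τ < b₀) (hfα : ∀ x ∈ Set.Ioc (-τ) b₀, α ≤ f x)
    {u : ℝ} (hu : -τ < u) :
    IntervalIntegrable (fun v => Real.exp (Fbt τ f v - Fbt τ f u) * (f v / (1 + v / τ)))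
      volume (-τ) u := by
  have h := (phi_integrable hτ hf hf hα hb₀ hfα hu).const_mul (Real.exp (-(Fbt τ f u)))
  have heq : (fun v => Real.exp (-(Fbt τ f u)) * (Real.exp (Fbt τ f v) * (f v / (1 + v / τ))))
      = fun v => Real.exp (Fbt τ f v - Fbt τ f u) * (f v / (1 + v / τ)) := by
    funext v
    rw [show Fbt τ f v - Fbt τ f u = Fbt τ f v + -(Fbt τ f u) by ring, Real.exp_add]
    ring
  rw [← heq]
  exact h

lemma Wint_one (hτ : 0 < τ) (hf : ContinuousOn f (Set.Ici (-τ)))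
    {α b₀ : ℝ} (hα : 0 < α) (hb₀ : -τ < b₀) (hfα : ∀ x ∈ Set.Ioc (-τ) b₀, α ≤ f x)
    {u : ℝ} (hu : -τ < u) (hub : u ≤ b₀) :
    ∫ v in (-τ)..u, Real.exp (Fbt τ f v - Fbt τ f u) * (f v / (1 + v / τ)) = 1 := by
  set W := fun v => Real.exp (Fbt τ f v - Fbt τ f u) * (f v / (1 + v / τ)) with hWdef
  have hWint : IntervalIntegrable W volume (-τ) u := W_int hτ hf hα hb₀ hfα hu
  have hFTC : ∀ x ∈ Set.Ioc (-τ) u,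
      ∫ v in x..u, W v = 1 - Real.exp (Fbt τ f x - Fbt τ f u) := by
    intro x hx
    have hders : ∀ y ∈ Set.uIcc x u,
        HasDerivAt (fun z => Real.exp (Fbt τ f z - Fbt τ f u)) (W y) y := by
      intro y hy
      rw [Set.uIcc_of_le hx.2] at hy
      have hy' : -τ < y := lt_of_lt_of_le hx.1 hy.1
      exact ((F_deriv hτ hf hy').sub_const _).exp
    have hWx : IntervalIntegrable W volume x u := by
      apply hWint.mono_set'
      rw [Set.uIoc_of_le hx.2, Set.uIoc_of_le hu.le]
      exact Set.Ioc_subset_Ioc_left hx.1.le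
    rw [intervalIntegral.integral_eq_sub_of_hasDerivAt hders hWx]
    simp
  have hIcc : IntegrableOn W (Set.uIcc (-τ) u) volume := by
    rw [Set.uIcc_of_le hu.le]
    exact (integrableOn_Icc_iff_integrableOn_Ioc).mpr
      ((intervalIntegrable_iff_integrableOn_Ioc_of_le hu.le).mp hWint)
  have hcont := intervalIntegral.continuousOn_primitive_interval_left hIcc
  have h2 : ContinuousWithinAt (fun x => ∫ t in x..u, W t) (Set.uIcc (-τ) u) (-τ) :=
    hcont _ Set.left_mem_uIcc
  have hle : nhdsWithin (-τ) (Set.Ioi (-τ)) ≤ nhdsWithin (-τ) (Set.uIcc (-τ) u) := by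
    apply nhdsWithin_le_of_mem
    apply Filter.mem_of_superset (Ioc_mem_nhdsGT_of_mem ⟨le_refl _, hu⟩)
    rw [Set.uIcc_of_le hu.le]
    exact Set.Ioc_subset_Icc_self
  have h1 : Filter.Tendsto (fun x => ∫ t in x..u, W t) (nhdsWithin (-τ) (Set.Ioi (-τ)))
      (nhds (∫ t in (-τ)..u, W t)) := h2.mono_left hle
  have hp : 0 < α * τ := mul_pos hα hτ
  have hrc : ContinuousAt (fun x : ℝ => ((τ + x) / (τ + u)) ^ (α * τ)) (-τ) := by
    apply ContinuousAt.rpow_const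
    · exact ((continuous_const.add continuous_id).div_const _).continuousAt
    · exact Or.inr hp.le
  have hup : Filter.Tendsto (fun x : ℝ => ((τ + x) / (τ + u)) ^ (α * τ))
      (nhdsWithin (-τ) (Set.Ioi (-τ))) (nhds 0) := by
    have h0 : Filter.Tendsto (fun x : ℝ => ((τ + x) / (τ + u)) ^ (α * τ))
        (nhdsWithin (-τ) (Set.Ioi (-τ))) (nhds (((τ + -τ) / (τ + u)) ^ (α * τ))) :=
      hrc.tendsto.mono_left nhdsWithin_le_nhds
    simpa [Real.zero_rpow hp.ne'] using h0
  have hz : Filter.Tendsto (fun x => Real.exp (Fbt τ f x - Fbt τ f u))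
      (nhdsWithin (-τ) (Set.Ioi (-τ))) (nhds 0) := by
    apply tendsto_of_tendsto_of_tendsto_of_le_of_le' (g := fun _ => (0:ℝ))
      tendsto_const_nhds hup
    · exact Filter.Eventually.of_forall fun x => (Real.exp_pos _).le
    · filter_upwards [Ioc_mem_nhdsGT_of_mem ⟨le_refl _, hu⟩] with x hx
      exact keybound hτ hf hα hfα hx.1 hx.2 hub
  have h3 : Filter.Tendsto (fun x => 1 - Real.exp (Fbt τ f x - Fbt τ f u))
      (nhdsWithin (-τ) (Set.Ioi (-τ))) (nhds 1) := by
    have := (tendsto_const_nhds (x := (1:ℝ)) (f := nhdsWithin (-τ) (Set.Ioi (-τ)))).sub hz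
    simpa using this
  have h4 : (fun x => ∫ t in x..u, W t) =ᶠ[nhdsWithin (-τ) (Set.Ioi (-τ))]
      (fun x => 1 - Real.exp (Fbt τ f x - Fbt τ f u)) := by
    filter_upwards [Ioc_mem_nhdsGT_of_mem ⟨le_refl _, hu⟩] with x hx
    exact hFTC x hx
  exact tendsto_nhds_unique (Filter.Tendsto.congr' h4 h1) h3

lemma exists_fbound (hf : ContinuousOn f (Set.Ici (-τ))) (hfτ : 0 < f (-τ)) :
    ∃ b₀, -τ < b₀ ∧ ∀ x ∈ Set.Icc (-τ) b₀, f (-τ) / 2 ≤ f x := by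
  have hc : ContinuousWithinAt f (Set.Ici (-τ)) (-τ) := hf _ Set.self_mem_Ici
  have h1 : ∀ᶠ x in nhdsWithin (-τ) (Set.Ici (-τ)), f (-τ) / 2 < f x :=
    hc (lt_mem_nhds (by linarith))
  obtain ⟨c, hc', hsub⟩ := mem_nhdsGE_iff_exists_Ico_subset.mp h1
  have hcc : -τ < c := hc'
  refine ⟨(-τ + c) / 2, by linarith, ?_⟩
  intro x hx
  exact (hsub ⟨hx.1, by cases hx; linarith⟩).le

lemma tendsto_lam (hτ : 0 < τ) (hf : ContinuousOn f (Set.Ici (-τ)))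
    (hg : ContinuousOn g (Set.Ici (-τ))) (hfτ : 0 < f (-τ)) :
    Filter.Tendsto (lamBT τ f g) (nhdsWithin (-τ) (Set.Ioi (-τ)))
      (nhds (g (-τ) / f (-τ))) := by
  obtain ⟨b₀, hb₀, hfα⟩ := exists_fbound hf hfτ
  have hα : 0 < f (-τ) / 2 := by linarith
  set α := f (-τ) / 2 with hαdef
  have hfα' : ∀ x ∈ Set.Ioc (-τ) b₀, α ≤ f x := fun x hx => hfα x ⟨hx.1.le, hx.2⟩
  set L := g (-τ) / f (-τ) with hLdef
  rw [Metric.tendsto_nhdsWithin_nhds]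
  intro ε hε
  have hq : ContinuousWithinAt (fun v => g v / f v) (Set.Ici (-τ)) (-τ) :=
    (hg _ Set.self_mem_Ici).div (hf _ Set.self_mem_Ici) hfτ.ne'
  have h1 : ∀ᶠ v in nhdsWithin (-τ) (Set.Ici (-τ)), |g v / f v - L| ≤ ε / 2 := by
    have hball := hq (Metric.ball_mem_nhds _ (show (0:ℝ) < ε / 2 by positivity))
    filter_upwards [hball] with v hv
    have := Metric.mem_ball.mp hv
    rw [Real.dist_eq] at this
    exact this.le
  obtain ⟨c, hcmem, hsub⟩ := mem_nhdsGE_iff_exists_Ico_subset.mp h1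
  have hc : -τ < c := hcmem
  refine ⟨min (c + τ) (b₀ + τ), lt_min (by linarith) (by linarith), ?_⟩
  intro u hu hud
  have hu1 : -τ < u := hu
  rw [Real.dist_eq, abs_of_pos (by linarith : (0:ℝ) < u - -τ)] at hud
  have huc : u < c := by have := lt_min_iff.mp hud; linarith [this.1]
  have hub : u ≤ b₀ := by have := lt_min_iff.mp hud; linarith [this.2]
  set W := fun v => Real.exp (Fbt τ f v - Fbt τ f u) * (f v / (1 + v / τ)) with hWdef
  have hW1 : ∫ v in (-τ)..u, W v = 1 := Wint_one hτ hf hα hb₀ hfα' hu1 hub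
  have hWint : IntervalIntegrable W volume (-τ) u := W_int hτ hf hα hb₀ hfα' hu1
  have hWnn : ∀ v ∈ Set.Icc (-τ) u, 0 ≤ W v := by
    intro v hv
    rcases eq_or_lt_of_le hv.1 with h | h
    · rw [hWdef]
      simp only
      rw [← h, show (1:ℝ) + (-τ) / τ = 0 by field_simp; ring, div_zero, mul_zero]
    · have hfv : (0:ℝ) ≤ f v := le_trans hα.le (hfα' v ⟨h, hv.2.trans hub⟩)
      exact mul_nonneg (Real.exp_pos _).le (div_nonneg hfv (hden hτ h).le)
  have hE := part1 hτ hf hg hα hb₀ hfα' hu1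
  have hqW_eq : ∀ v ∈ Set.Ioc (-τ) u,
      Real.exp (-(∫ ω in v..u, f ω / (1 + ω / τ))) * (g v / (1 + v / τ))
        = (g v / f v) * W v := by
    intro v hv
    have hfv : 0 < f v := lt_of_lt_of_le hα (hfα' v ⟨hv.1, hv.2.trans hub⟩)
    have hdv : (1:ℝ) + v / τ ≠ 0 := (hden hτ hv.1).ne'
    rw [F_sub hτ hf hv.1 hu1, hWdef]
    simp only
    rw [show -(Fbt τ f u - Fbt τ f v) = Fbt τ f v - Fbt τ f u by ring]
    have hcancel : g v / f v * (f v / (1 + v / τ)) = g v / (1 + v / τ) := by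
      rw [div_mul_div_comm, mul_comm (g v) (f v), mul_div_mul_left _ _ hfv.ne']
    rw [show g v / f v * (Real.exp (Fbt τ f v - Fbt τ f u) * (f v / (1 + v / τ)))
        = Real.exp (Fbt τ f v - Fbt τ f u) * (g v / f v * (f v / (1 + v / τ))) by ring,
      hcancel]
  have hlam : lamBT τ f g u = ∫ v in (-τ)..u, (g v / f v) * W v := by
    rw [lamBT]
    apply intervalIntegral.integral_congr_ae
    apply MeasureTheory.ae_of_all
    intro v hv
    rw [Set.uIoc_of_le hu1.le] at hv
    exact hqW_eq v hv
  have hqWint : IntervalIntegrable (fun v => (g v / f v) * W v) volume (-τ) u := by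
    apply hE.mono_fun
    · rw [Set.uIoc_of_le hu1.le]
      apply hE.aestronglyMeasurable.congr
      filter_upwards [ae_restrict_mem measurableSet_Ioc] with v hv
      exact hqW_eq v hv
    · rw [Set.uIoc_of_le hu1.le]
      filter_upwards [ae_restrict_mem measurableSet_Ioc] with v hv
      rw [← hqW_eq v hv]
  have hLWint : IntervalIntegrable (fun v => L * W v) volume (-τ) u := hWint.const_mul L
  have hsubint : IntervalIntegrable (fun v => (g v / f v - L) * W v) volume (-τ) u := by
    have := hqWint.sub hLWint
    simpa [sub_mul] using this
  have hdiff : lamBT τ f g u - L = ∫ v in (-τ)..u, (g v / f v - L) * W v := by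
    have e : ∫ v in (-τ)..u, (g v / f v - L) * W v
        = (∫ v in (-τ)..u, (g v / f v) * W v) - ∫ v in (-τ)..u, L * W v := by
      rw [← intervalIntegral.integral_sub hqWint hLWint]
      apply intervalIntegral.integral_congr
      intro v _
      ring
    rw [e, ← hlam, intervalIntegral.integral_const_mul, hW1, mul_one]
  have hbound : |lamBT τ f g u - L| ≤ ε / 2 := by
    rw [hdiff]
    calc |∫ v in (-τ)..u, (g v / f v - L) * W v|
        ≤ ∫ v in (-τ)..u, |(g v / f v - L) * W v| :=
          intervalIntegral.abs_integral_le_integral_abs hu1.le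
      _ ≤ ∫ v in (-τ)..u, (ε / 2) * W v := by
          apply intervalIntegral.integral_mono_on hu1.le hsubint.abs
            (hWint.const_mul (ε / 2))
          intro x hx
          rw [abs_mul, abs_of_nonneg (hWnn x hx)]
          apply mul_le_mul_of_nonneg_right _ (hWnn x hx)
          exact hsub ⟨hx.1, lt_of_le_of_lt hx.2 huc⟩
      _ = ε / 2 := by rw [intervalIntegral.integral_const_mul, hW1, mul_one]
  rw [Real.dist_eq]
  linarith [abs_nonneg (lamBT τ f g u - L)]

end BTaux

theorem BT_ode_existence
    (τ : ℝ) (hτ : 0 < τ) (f g : ℝ → ℝ)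
    (hf : ContinuousOn f (Set.Ici (-τ)))
    (hg : ContinuousOn g (Set.Ici (-τ)))
    (hfτ : 0 < f (-τ)) :
    (∀ u : ℝ, -τ < u →
      IntervalIntegrable
        (fun v => Real.exp (-(∫ ω in v..u, f ω / (1 + ω / τ))) * (g v / (1 + v / τ)))
        volume (-τ) u) ∧
    (∀ u : ℝ, -τ < u → ∃ d : ℝ,
      HasDerivAt (lamBT τ f g) d u ∧
      (1 + u / τ) * d + f u * lamBT τ f g u - g u = 0) ∧
    (∃ Λext : ℝ → ℝ, ContinuousOn Λext (Set.Ici (-τ)) ∧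
      (∀ u : ℝ, -τ < u → Λext u = lamBT τ f g u) ∧
      Λext (-τ) = g (-τ) / f (-τ)) := by
  obtain ⟨b₀, hb₀, hfα⟩ := BTaux.exists_fbound hf hfτ
  have hα : 0 < f (-τ) / 2 := by linarith
  have hfα' : ∀ x ∈ Set.Ioc (-τ) b₀, f (-τ) / 2 ≤ f x := fun x hx => hfα x ⟨hx.1.le, hx.2⟩
  refine ⟨fun u hu => BTaux.part1 hτ hf hg hα hb₀ hfα' hu,
    fun u hu => BTaux.part2 hτ hf hg hα hb₀ hfα' hu, ?_⟩
  refine ⟨fun u => if -τ < u then lamBT τ f g u else g (-τ) / f (-τ), ?_, ?_, ?_⟩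
  · intro x hx
    rcases eq_or_lt_of_le (Set.mem_Ici.mp hx) with h | h
    · rw [← h]
      rw [← continuousWithinAt_Ioi_iff_Ici]
      have hT := BTaux.tendsto_lam hτ hf hg hfτ
      have hT' : Filter.Tendsto (fun u => if -τ < u then lamBT τ f g u else g (-τ) / f (-τ))
          (nhdsWithin (-τ) (Set.Ioi (-τ))) (nhds (g (-τ) / f (-τ))) := by
        apply hT.congr'
        filter_upwards [self_mem_nhdsWithin] with y hy
        exact (if_pos hy).symm
      have hval : (fun u => if -τ < u then lamBT τ f g u else g (-τ) / f (-τ)) (-τ)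
          = g (-τ) / f (-τ) := if_neg (lt_irrefl _)
      unfold ContinuousWithinAt
      rw [hval]
      exact hT'
    · have hx' : -τ < x := h
      obtain ⟨d, hd, -⟩ := BTaux.part2 hτ hf hg hα hb₀ hfα' hx'
      apply ContinuousAt.continuousWithinAt
      apply hd.continuousAt.congr
      filter_upwards [isOpen_Ioi.mem_nhds hx'] with y hy
      exact (if_pos hy).symm
  · intro u hu
    exact if_pos hu
  · exact if_neg (lt_irrefl _)
end

section
/- Let τ > 0 and let f, g : [−τ, ∞) → ℝ be continuous with f(−τ) > 0. If Λ₁ and Λ₂ are continuous functions on [−τ, ∞), differentiable on (−τ, ∞), and both satisfy the ODE (1 + u/τ)·Λ'(u) + f(u)·Λ(u) − g(u) = 0 for all u > −τ, then Λ₁ = Λ₂ on [−τ, ∞). -/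
set_option maxHeartbeats 1000000

open Set Real Filter

/- STATEMENT 10: uniqueness part of Proposition 5.2 of Baccelli–Taillefumier:
any two continuous solutions on [−τ,∞) of the singular ODE
(1+u/τ)Λ'(u) + f(u)Λ(u) − g(u) = 0 (for u > −τ) coincide on [−τ,∞). -/
theorem BT_ode_uniqueness
    (τ : ℝ) (hτ : 0 < τ) (f g : ℝ → ℝ)
    (hf : ContinuousOn f (Set.Ici (-τ)))
    (hg : ContinuousOn g (Set.Ici (-τ)))
    (hfτ : 0 < f (-τ))
    (Λ₁ Λ₂ : ℝ → ℝ)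
    (hΛ₁_cont : ContinuousOn Λ₁ (Set.Ici (-τ)))
    (hΛ₂_cont : ContinuousOn Λ₂ (Set.Ici (-τ)))
    (hΛ₁_ode : ∀ u : ℝ, -τ < u → ∃ d : ℝ,
      HasDerivAt Λ₁ d u ∧ (1 + u / τ) * d + f u * Λ₁ u - g u = 0)
    (hΛ₂_ode : ∀ u : ℝ, -τ < u → ∃ d : ℝ,
      HasDerivAt Λ₂ d u ∧ (1 + u / τ) * d + f u * Λ₂ u - g u = 0) :
    Set.EqOn Λ₁ Λ₂ (Set.Ici (-τ)) := by
  have hpos : ∀ u : ℝ, -τ < u → (0:ℝ) < 1 + u / τ := by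
    intro u hu
    rw [show (1:ℝ) + u / τ = (u + τ) / τ by field_simp; ring]
    exact div_pos (by linarith) hτ
  -- the difference D satisfies the homogeneous ODE
  have hD_ode : ∀ u : ℝ, -τ < u → ∃ d : ℝ,
      HasDerivAt (fun x => Λ₁ x - Λ₂ x) d u ∧
      d * (1 + u / τ) = -(f u * (Λ₁ u - Λ₂ u)) := by
    intro u hu
    obtain ⟨d₁, h₁, e₁⟩ := hΛ₁_ode u hu
    obtain ⟨d₂, h₂, e₂⟩ := hΛ₂_ode u hu
    refine ⟨d₁ - d₂, h₁.sub h₂, ?_⟩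
    linear_combination e₁ - e₂
  -- choose b close to -τ where f ≥ c > 0
  set c := f (-τ) / 2 with hc
  have hc0 : 0 < c := by positivity
  obtain ⟨δ, hδ0, hδ⟩ := Metric.continuousWithinAt_iff.mp (hf (-τ) self_mem_Ici) c hc0
  set b := -τ + δ / 2 with hb
  have hbτ : -τ < b := by simp only [hb]; linarith
  have hfb : ∀ u ∈ Icc (-τ) b, c ≤ f u := by
    intro u hu
    have hud : dist u (-τ) < δ := by
      rw [Real.dist_eq, abs_lt]
      constructor
      · linarith [hu.1]
      · have := hu.2; simp only [hb] at this; linarith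
    have h2 := hδ hu.1 hud
    rw [Real.dist_eq, abs_lt] at h2
    have := h2.1
    simp only [hc] at *
    linarith
  -- Lyapunov function near -τ
  set p := 2 * c * τ with hpdef
  have hp0 : 0 < p := by positivity
  set P := fun u : ℝ => (Λ₁ u - Λ₂ u) ^ 2 * (1 + u / τ) ^ p with hP
  have hA_cont : Continuous fun u : ℝ => (1 + u / τ) ^ p := by
    apply continuous_iff_continuousAt.mpr
    intro x
    exact (Real.continuousAt_rpow_const _ p (Or.inr hp0.le)).comp (by fun_prop)
  have hPcont : ContinuousOn P (Icc (-τ) b) := by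
    apply ContinuousOn.mul
    · exact (((hΛ₁_cont.sub hΛ₂_cont).pow 2).mono Icc_subset_Ici_self)
    · exact hA_cont.continuousOn
  -- derivative of P on the interior
  have hPderiv : ∀ u ∈ Ioo (-τ) b, ∃ e : ℝ, HasDerivAt P e u ∧ e ≤ 0 := by
    intro u hu
    have hx : (0:ℝ) < 1 + u / τ := hpos u hu.1
    obtain ⟨d, hd, hdval⟩ := hD_ode u hu.1
    have hAff : HasDerivAt (fun x : ℝ => 1 + x / τ) (1 / τ) u := by
      simpa using ((hasDerivAt_id u).div_const τ).const_add 1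
    have hA : HasDerivAt (fun x : ℝ => (1 + x / τ) ^ p)
        (1 / τ * p * (1 + u / τ) ^ (p - 1)) u :=
      hAff.rpow_const (Or.inl hx.ne')
    have hDP : HasDerivAt P
        ((2 * (Λ₁ u - Λ₂ u) ^ (2 - 1) * d) * (1 + u / τ) ^ p
          + (Λ₁ u - Λ₂ u) ^ 2 * (1 / τ * p * (1 + u / τ) ^ (p - 1))) u :=
      (hd.pow 2).mul hA
    refine ⟨_, hDP, ?_⟩
    have hd' : d = -(f u * (Λ₁ u - Λ₂ u)) / (1 + u / τ) := by
      rw [eq_div_iff hx.ne']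
      exact hdval
    have hkey : (2 * (Λ₁ u - Λ₂ u) ^ (2 - 1) * d) * (1 + u / τ) ^ p
          + (Λ₁ u - Λ₂ u) ^ 2 * (1 / τ * p * (1 + u / τ) ^ (p - 1))
        = (Λ₁ u - Λ₂ u) ^ 2 * (1 + u / τ) ^ (p - 1) * (2 * c - 2 * f u) := by
      rw [hd', Real.rpow_sub_one hx.ne']
      simp only [hpdef]
      field_simp
      ring
    rw [hkey]
    have h1 : (0:ℝ) ≤ (Λ₁ u - Λ₂ u) ^ 2 * (1 + u / τ) ^ (p - 1) :=
      mul_nonneg (sq_nonneg _) (Real.rpow_pos_of_pos hx _).le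
    have h2 : 2 * c - 2 * f u ≤ 0 := by
      have := hfb u ⟨hu.1.le, hu.2.le⟩; linarith
    exact mul_nonpos_of_nonneg_of_nonpos h1 h2
  have hPanti : AntitoneOn P (Icc (-τ) b) := by
    apply antitoneOn_of_deriv_nonpos (convex_Icc _ _) hPcont
    · intro x hx
      rw [interior_Icc] at hx
      obtain ⟨e, he, _⟩ := hPderiv x hx
      exact he.differentiableAt.differentiableWithinAt
    · intro x hx
      rw [interior_Icc] at hx
      obtain ⟨e, he, hle⟩ := hPderiv x hx
      rw [he.deriv]; exact hle
  have hPτ : P (-τ) = 0 := by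
    simp only [hP]
    rw [show (1:ℝ) + -τ / τ = 0 by field_simp; norm_num, Real.zero_rpow hp0.ne', mul_zero]
  -- D vanishes on (-τ, b]
  have hD0b : ∀ u ∈ Ioc (-τ) b, Λ₁ u = Λ₂ u := by
    intro u hu
    have h1 : (0:ℝ) < 1 + u / τ := hpos u hu.1
    have h2 : P u ≤ P (-τ) :=
      hPanti (left_mem_Icc.mpr hbτ.le) ⟨hu.1.le, hu.2⟩ hu.1.le
    rw [hPτ] at h2
    have h3 : (0:ℝ) < (1 + u / τ) ^ p := Real.rpow_pos_of_pos h1 p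
    have h4 : (Λ₁ u - Λ₂ u) ^ 2 = 0 := by
      simp only [hP] at h2
      nlinarith [sq_nonneg (Λ₁ u - Λ₂ u)]
    have h5 := pow_eq_zero_iff (n := 2) (by norm_num) |>.mp h4
    linarith [sub_eq_zero.mp h5]
  -- propagate forward past b by a Gronwall-type argument
  have hD0x : ∀ x : ℝ, b < x → Λ₁ x = Λ₂ x := by
    intro x hx
    have hIcc_sub : Icc b x ⊆ Ici (-τ) := fun u hu => le_trans hbτ.le hu.1
    obtain ⟨M, hM⟩ := (isCompact_Icc (a := b) (b := x)).exists_bound_of_continuousOn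
      (hf.mono hIcc_sub)
    have hbpos : (0:ℝ) < 1 + b / τ := hpos b hbτ
    set K := max M 0 / (1 + b / τ) with hK
    have hK0 : 0 ≤ K := div_nonneg (le_max_right _ _) hbpos.le
    set Q := fun u : ℝ => (Λ₁ u - Λ₂ u) ^ 2 * Real.exp (-(2 * K) * u) with hQ
    have hQcont : ContinuousOn Q (Icc b x) := by
      apply ContinuousOn.mul
      · exact ((hΛ₁_cont.sub hΛ₂_cont).pow 2).mono hIcc_sub
      · exact (Real.continuous_exp.comp (continuous_const.mul continuous_id)).continuousOn
    have hQderiv : ∀ u ∈ Ioo b x, ∃ e : ℝ, HasDerivAt Q e u ∧ e ≤ 0 := by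
      intro u hu
      have huτ : -τ < u := lt_trans hbτ hu.1
      have hxτ : (0:ℝ) < 1 + u / τ := hpos u huτ
      obtain ⟨d, hd, hdval⟩ := hD_ode u huτ
      have hE : HasDerivAt (fun y : ℝ => Real.exp (-(2 * K) * y))
          (-(2 * K) * Real.exp (-(2 * K) * u)) u := by
        have h := ((hasDerivAt_id u).const_mul (-(2 * K))).exp
        simp only [id_eq, mul_one] at h
        convert h using 1
        ring
      have hDQ : HasDerivAt Q
          ((2 * (Λ₁ u - Λ₂ u) ^ (2 - 1) * d) * Real.exp (-(2 * K) * u)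
            + (Λ₁ u - Λ₂ u) ^ 2 * (-(2 * K) * Real.exp (-(2 * K) * u))) u :=
        (hd.pow 2).mul hE
      refine ⟨_, hDQ, ?_⟩
      have hEpos : (0:ℝ) < Real.exp (-(2 * K) * u) := Real.exp_pos _
      -- bound: -(f u) ≤ K * (1 + u/τ)
      have hfu : -(f u) ≤ max M 0 := by
        have h := hM u ⟨hu.1.le, hu.2.le⟩
        rw [Real.norm_eq_abs, abs_le] at h
        exact le_trans (by linarith [h.1]) (le_max_left M 0)
      have hKb : K * (1 + b / τ) = max M 0 := by
        rw [hK, div_mul_cancel₀ _ hbpos.ne']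
      have hmono : 1 + b / τ ≤ 1 + u / τ := by
        have : b / τ ≤ u / τ := (div_le_div_iff_of_pos_right hτ).mpr hu.1.le
        linarith
      have hineq : -(f u) ≤ K * (1 + u / τ) := by
        calc -(f u) ≤ max M 0 := hfu
          _ = K * (1 + b / τ) := hKb.symm
          _ ≤ K * (1 + u / τ) := mul_le_mul_of_nonneg_left hmono hK0
      have hmul : (Λ₁ u - Λ₂ u) ^ 2 * (-(f u)) ≤ (Λ₁ u - Λ₂ u) ^ 2 * (K * (1 + u / τ)) :=
        mul_le_mul_of_nonneg_left hineq (sq_nonneg _)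
      have h7 : 2 * (Λ₁ u - Λ₂ u) * (d * (1 + u / τ))
          = 2 * (Λ₁ u - Λ₂ u) * (-(f u * (Λ₁ u - Λ₂ u))) := by rw [hdval]
      have h6 : (2 * (Λ₁ u - Λ₂ u) * d + -(2 * K) * (Λ₁ u - Λ₂ u) ^ 2) * (1 + u / τ) ≤ 0 := by
        nlinarith [h7, hmul]
      have h8 : 2 * (Λ₁ u - Λ₂ u) * d + -(2 * K) * (Λ₁ u - Λ₂ u) ^ 2 ≤ 0 := by
        by_contra hcon
        push_neg at hcon
        nlinarith [h6, hxτ]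
      have hfinal : (2 * (Λ₁ u - Λ₂ u) ^ (2 - 1) * d) * Real.exp (-(2 * K) * u)
            + (Λ₁ u - Λ₂ u) ^ 2 * (-(2 * K) * Real.exp (-(2 * K) * u))
          = (2 * (Λ₁ u - Λ₂ u) * d + -(2 * K) * (Λ₁ u - Λ₂ u) ^ 2)
              * Real.exp (-(2 * K) * u) := by
        norm_num; ring
      rw [hfinal]
      exact mul_nonpos_of_nonpos_of_nonneg h8 hEpos.le
    have hQanti : AntitoneOn Q (Icc b x) := by
      apply antitoneOn_of_deriv_nonpos (convex_Icc _ _) hQcont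
      · intro y hy
        rw [interior_Icc] at hy
        obtain ⟨e, he, _⟩ := hQderiv y hy
        exact he.differentiableAt.differentiableWithinAt
      · intro y hy
        rw [interior_Icc] at hy
        obtain ⟨e, he, hle⟩ := hQderiv y hy
        rw [he.deriv]; exact hle
    have hQb : Q b = 0 := by
      have hbb : Λ₁ b = Λ₂ b := hD0b b ⟨hbτ, le_refl b⟩
      simp only [hQ, hbb, sub_self]
      ring
    have h2 : Q x ≤ Q b := hQanti (left_mem_Icc.mpr hx.le) (right_mem_Icc.mpr hx.le) hx.le
    rw [hQb] at h2
    have hEpos : (0:ℝ) < Real.exp (-(2 * K) * x) := Real.exp_pos _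
    have h4 : (Λ₁ x - Λ₂ x) ^ 2 = 0 := by
      simp only [hQ] at h2
      nlinarith [sq_nonneg (Λ₁ x - Λ₂ x)]
    have h5 := pow_eq_zero_iff (n := 2) (by norm_num) |>.mp h4
    linarith [sub_eq_zero.mp h5]
  -- D vanishes on (-τ, ∞)
  have hIoi : ∀ u ∈ Ioi (-τ), Λ₁ u = Λ₂ u := by
    intro u hu
    rcases le_or_gt u b with h | h
    · exact hD0b u ⟨hu, h⟩
    · exact hD0x u h
  -- extend to -τ by continuity
  intro v hv
  rcases eq_or_lt_of_le (Set.mem_Ici.mp hv) with h | h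
  · subst h
    have h1 : Tendsto Λ₁ (nhdsWithin (-τ) (Ioi (-τ))) (nhds (Λ₁ (-τ))) :=
      (hΛ₁_cont (-τ) self_mem_Ici).mono Ioi_subset_Ici_self
    have h2 : Tendsto Λ₂ (nhdsWithin (-τ) (Ioi (-τ))) (nhds (Λ₂ (-τ))) :=
      (hΛ₂_cont (-τ) self_mem_Ici).mono Ioi_subset_Ici_self
    have heq : Λ₁ =ᶠ[nhdsWithin (-τ) (Ioi (-τ))] Λ₂ :=
      eventually_nhdsWithin_of_forall hIoi
    exact tendsto_nhds_unique (h1.congr' heq) h2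
  · exact hIoi v h
end

section
/- Let r > 0, β > 0, let J be a finite index set, and for j ∈ J let β_j ≥ 0 and W_j > 0. Define Λ : ℝ → ℝ by Λ(u) = β·∫_{−∞}^{u} exp(r·v + ∑_{j∈J} β_j·[(e^{W_j·u} − e^{W_j·v})/W_j − (u − v)]) dv. Then (i) the integral converges for every u ∈ ℝ, Λ is differentiable, and −Λ'(u) + (∑_{j∈J} (e^{u·W_j} − 1)·β_j)·Λ(u) + β·e^{u·r} = 0 for all u ∈ ℝ; and (ii) Λ(0) = 1 if and only if 1/β = ∫_{−∞}^{0} exp(r·v − ∑_{j∈J} β_j·((e^{W_j·v} − 1)/W_j − v)) dv. -/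
set_option maxHeartbeats 1000000

open MeasureTheory Set Filter

lemma aux_exp_int (c u : ℝ) (hc : 0 < c) :
    IntegrableOn (fun x => Real.exp (c * x)) (Iic u) volume := by
  have hcont : Continuous fun x => Real.exp (c * x) :=
    Real.continuous_exp.comp (continuous_const.mul continuous_id)
  refine integrableOn_Iic_of_intervalIntegral_norm_bounded (Real.exp (c * u) / c) u
    (fun y => (hcont.integrableOn_Ioc)) tendsto_id ?_
  filter_upwards with y
  simp_rw [Real.norm_of_nonneg (Real.exp_pos _).le]
  have : ∫ x in y..u, Real.exp (c * x) = c⁻¹ • ∫ x in c * y..c * u, Real.exp x := by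
    simpa using intervalIntegral.integral_comp_mul_left (f := Real.exp) (a := y) (b := u) hc.ne'
  simp only [id]
  rw [this, integral_exp, smul_eq_mul, div_eq_inv_mul]
  have := (Real.exp_pos (c * y)).le
  nlinarith [inv_pos.mpr hc]

theorem RMF_driftless_MGF_ode
    (r β : ℝ) (hr : 0 < r) (hβ : 0 < β)
    (J : Finset ℕ) (βw Wgt : ℕ → ℝ)
    (hβw : ∀ j ∈ J, 0 ≤ βw j)
    (hW : ∀ j ∈ J, 0 < Wgt j) :
    ((∀ u : ℝ,
        IntegrableOn
          (fun v => Real.exp (r * v + ∑ j ∈ J, βw j *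
            ((Real.exp (Wgt j * u) - Real.exp (Wgt j * v)) / Wgt j - (u - v))))
          (Set.Iic u) volume) ∧
      (∀ u : ℝ, ∃ d : ℝ,
        HasDerivAt
          (fun u' => β * ∫ v in Set.Iic u', Real.exp (r * v + ∑ j ∈ J, βw j *
            ((Real.exp (Wgt j * u') - Real.exp (Wgt j * v)) / Wgt j - (u' - v))))
          d u ∧
        -d + (∑ j ∈ J, (Real.exp (u * Wgt j) - 1) * βw j) *
            (β * ∫ v in Set.Iic u, Real.exp (r * v + ∑ j ∈ J, βw j *
              ((Real.exp (Wgt j * u) - Real.exp (Wgt j * v)) / Wgt j - (u - v))))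
          + β * Real.exp (u * r) = 0)) ∧
    ((β * ∫ v in Set.Iic (0 : ℝ), Real.exp (r * v + ∑ j ∈ J, βw j *
        ((Real.exp (Wgt j * 0) - Real.exp (Wgt j * v)) / Wgt j - (0 - v)))) = 1
      ↔ 1 / β = ∫ v in Set.Iic (0 : ℝ), Real.exp (r * v - ∑ j ∈ J, βw j *
          ((Real.exp (Wgt j * v) - 1) / Wgt j - v))) := by
  classical
  set g : ℝ → ℝ := fun x => ∑ j ∈ J, βw j * (Real.exp (Wgt j * x) / Wgt j - x) with hg_def
  set f : ℝ → ℝ := fun v => Real.exp (r * v - g v) with hf_def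
  have hkey : ∀ u v : ℝ, r * v + ∑ j ∈ J, βw j *
      ((Real.exp (Wgt j * u) - Real.exp (Wgt j * v)) / Wgt j - (u - v))
      = g u + (r * v - g v) := by
    intro u v
    have h1 : ∑ j ∈ J, βw j * ((Real.exp (Wgt j * u) - Real.exp (Wgt j * v)) / Wgt j - (u - v))
        = g u - g v := by
      simp only [hg_def, ← Finset.sum_sub_distrib]
      exact Finset.sum_congr rfl fun j hj => by ring
    rw [h1]; ring
  have hgcont : Continuous g := continuous_finset_sum _ fun j hj =>
    continuous_const.mul
      (((Real.continuous_exp.comp (continuous_const.mul continuous_id)).div_const _).sub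
        continuous_id)
  have hfcont : Continuous f :=
    Real.continuous_exp.comp ((continuous_const.mul continuous_id).sub hgcont)
  set B := ∑ j ∈ J, βw j with hB_def
  have hB : 0 ≤ B := Finset.sum_nonneg hβw
  have hfint : ∀ u : ℝ, IntegrableOn f (Iic u) volume := by
    intro u
    apply (aux_exp_int (r + B) u (by linarith)).mono'
      (hfcont.aestronglyMeasurable.restrict)
    filter_upwards with v
    rw [Real.norm_of_nonneg (Real.exp_pos _).le]
    apply Real.exp_le_exp.2
    have h2 : 0 ≤ ∑ j ∈ J, βw j * (Real.exp (Wgt j * v) / Wgt j) :=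
      Finset.sum_nonneg fun j hj =>
        mul_nonneg (hβw j hj) (div_nonneg (Real.exp_pos _).le (hW j hj).le)
    have h3 : g v + B * v = ∑ j ∈ J, βw j * (Real.exp (Wgt j * v) / Wgt j) := by
      simp only [hg_def, hB_def, Finset.sum_mul, ← Finset.sum_add_distrib]
      exact Finset.sum_congr rfl fun j hj => by ring
    linarith
  have h4 : ∀ u : ℝ, (∫ v in Iic u, Real.exp (r * v + ∑ j ∈ J, βw j *
      ((Real.exp (Wgt j * u) - Real.exp (Wgt j * v)) / Wgt j - (u - v))))
      = Real.exp (g u) * ∫ v in Iic u, f v := by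
    intro u
    rw [← integral_const_mul]
    refine integral_congr_ae (Eventually.of_forall fun v => ?_)
    simp only [hkey u v, Real.exp_add, hf_def]
  have hIntOn : ∀ u : ℝ, IntegrableOn
      (fun v => Real.exp (r * v + ∑ j ∈ J, βw j *
        ((Real.exp (Wgt j * u) - Real.exp (Wgt j * v)) / Wgt j - (u - v)))) (Iic u) volume := by
    intro u
    have heq : (fun v => Real.exp (r * v + ∑ j ∈ J, βw j *
        ((Real.exp (Wgt j * u) - Real.exp (Wgt j * v)) / Wgt j - (u - v))))
        = fun v => Real.exp (g u) * f v := by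
      funext v; rw [hkey, Real.exp_add]
    rw [heq]
    exact (hfint u).const_mul _
  refine ⟨⟨hIntOn, ?_⟩, ?_⟩
  · intro u
    set Φ : ℝ → ℝ := fun t => ∫ v in Iic t, f v with hΦ_def
    have hΦder : HasDerivAt Φ (f u) u := by
      have h5 : ∀ t, Φ t = Φ u + ∫ x in u..t, f x := by
        intro t
        rw [← intervalIntegral.integral_Iic_sub_Iic (hfint u) (hfint t)]
        ring
      have h6 : HasDerivAt (fun t => Φ u + ∫ x in u..t, f x) (f u) u := by
        exact (intervalIntegral.integral_hasDerivAt_right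
          (hfcont.intervalIntegrable u u)
          (hfcont.stronglyMeasurable.stronglyMeasurableAtFilter)
          hfcont.continuousAt).const_add _
      exact h6.congr_of_eventuallyEq (Eventually.of_forall h5)
    have hgder : HasDerivAt g (∑ j ∈ J, βw j * (Real.exp (Wgt j * u) - 1)) u := by
      apply HasDerivAt.fun_sum
      intro j hj
      have hWj : Wgt j ≠ 0 := (hW j hj).ne'
      have h7 : HasDerivAt (fun x => Real.exp (Wgt j * x)) (Real.exp (Wgt j * u) * Wgt j) u := by
        simpa using ((hasDerivAt_id u).const_mul (Wgt j)).exp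
      have h8 := ((h7.div_const (Wgt j)).sub (hasDerivAt_id u)).const_mul (βw j)
      rw [mul_div_cancel_right₀ _ hWj] at h8
      exact h8
    set G := ∑ j ∈ J, βw j * (Real.exp (Wgt j * u) - 1) with hG_def
    have hder : HasDerivAt (fun u' => β * (Real.exp (g u') * Φ u'))
        (β * ((Real.exp (g u) * G) * Φ u + Real.exp (g u) * f u)) u :=
      (hgder.exp.mul hΦder).const_mul β
    have hefu : Real.exp (g u) * f u = Real.exp (u * r) := by
      rw [hf_def]
      simp only
      rw [← Real.exp_add]
      congr 1
      ring
    have hfuneq : (fun u' => β * ∫ v in Set.Iic u', Real.exp (r * v + ∑ j ∈ J, βw j *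
        ((Real.exp (Wgt j * u') - Real.exp (Wgt j * v)) / Wgt j - (u' - v))))
        = fun u' => β * (Real.exp (g u') * Φ u') := by
      funext u'
      rw [h4 u']
    refine ⟨β * ((Real.exp (g u) * G) * Φ u + Real.exp (u * r)), ?_, ?_⟩
    · rw [hfuneq]
      rw [← hefu]
      exact hder
    · rw [h4 u]
      have hGG : ∑ j ∈ J, (Real.exp (u * Wgt j) - 1) * βw j = G := by
        rw [hG_def]
        exact Finset.sum_congr rfl fun j hj => by rw [mul_comm u]; ring
      rw [hGG]
      ring
  · have h0 : (∫ v in Iic (0:ℝ), Real.exp (r * v + ∑ j ∈ J, βw j *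
        ((Real.exp (Wgt j * 0) - Real.exp (Wgt j * v)) / Wgt j - (0 - v))))
        = ∫ v in Iic (0:ℝ), Real.exp (r * v - ∑ j ∈ J, βw j *
          ((Real.exp (Wgt j * v) - 1) / Wgt j - v)) := by
      refine integral_congr_ae (Eventually.of_forall fun v => ?_)
      have hs : ∑ j ∈ J, βw j * ((Real.exp (Wgt j * 0) - Real.exp (Wgt j * v)) / Wgt j - (0 - v))
          = ∑ j ∈ J, -(βw j * ((Real.exp (Wgt j * v) - 1) / Wgt j - v)) := by
        refine Finset.sum_congr rfl fun j hj => ?_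
        rw [mul_zero, Real.exp_zero]
        ring
      have hexp : r * v + ∑ j ∈ J, βw j *
          ((Real.exp (Wgt j * 0) - Real.exp (Wgt j * v)) / Wgt j - (0 - v))
          = r * v - ∑ j ∈ J, βw j * ((Real.exp (Wgt j * v) - 1) / Wgt j - v) := by
        rw [hs, Finset.sum_neg_distrib]
        ring
      simp only [hexp]
    rw [h0]
    constructor
    · intro h
      rw [div_eq_iff hβ.ne']
      linarith
    · intro h
      rw [div_eq_iff hβ.ne'] at h
      linarith
end

section
/- Define synaptic weights W : ℕ × ℕ → ℝ (indices i ≥ 1) by W_{i,i+1} = −i, W_{i,i+2} = i, and W_{ij} = 0 otherwise. Then: (1) for every i ≥ 1, ∑_{j≠i} max(−W_{ij}, 0) = i = ∑_{j≠i} max(W_{ij}, 0), so condition (A) (the negative weights dominate the positive ones) holds; (2) for every i ≥ 3, ∑_{j≠i} |W_{ji}| = 2i − 3; in particular sup_{i} ∑_{j≠i} |W_{ji}| = ∞, so the Dobrushin condition sup_i ∑_j |W_{ji}| < ∞ fails. -/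
open Filter

lemma tsum_subtype_ne_eq_tsum {α β : Type*} [AddCommMonoid α] [TopologicalSpace α]
    {f : β → α} {i : β} (hi : f i = 0) :
    ∑' j : {j : β // j ≠ i}, f j = ∑' j, f j :=
  tsum_subtype_eq_of_support_subset (s := {j | j ≠ i}) fun j hj => by
    rintro rfl
    exact hj hi

def example1Weight (i j : ℕ) : ℝ :=
  if j = i + 1 then -(i : ℝ) else if j = i + 2 then (i : ℝ) else 0

lemma max_neg_example1Weight (i j : ℕ) :
    max (-example1Weight i j) 0 = if j = i + 1 then (i : ℝ) else 0 := by
  unfold example1Weight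
  split_ifs <;> simp

lemma max_example1Weight (i j : ℕ) :
    max (example1Weight i j) 0 = if j = i + 2 then (i : ℝ) else 0 := by
  unfold example1Weight
  split_ifs <;> first | omega | simp

lemma abs_example1Weight_add_two (j k : ℕ) :
    |example1Weight j (k + 2)| =
      (if j = k + 1 then ((k + 1 : ℕ) : ℝ) else 0) + (if j = k then (k : ℝ) else 0) := by
  unfold example1Weight
  split_ifs <;>
    simp only [abs_neg, Nat.abs_cast, abs_zero, add_zero, zero_add, Nat.cast_inj, Nat.cast_eq_zero] <;>
    omega

lemma tsum_max_neg_example1Weight (i : ℕ) :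
    ∑' j : {j : ℕ // j ≠ i}, max (-example1Weight i j) 0 = i := by
  simp_rw [max_neg_example1Weight]
  rw [tsum_subtype_ne_eq_tsum (f := fun j => if j = i + 1 then (i : ℝ) else 0) (by simp),
    tsum_ite_eq]

lemma tsum_max_example1Weight (i : ℕ) :
    ∑' j : {j : ℕ // j ≠ i}, max (example1Weight i j) 0 = i := by
  simp_rw [max_example1Weight]
  rw [tsum_subtype_ne_eq_tsum (f := fun j => if j = i + 2 then (i : ℝ) else 0) (by simp),
    tsum_ite_eq]

lemma tsum_abs_example1Weight_col {i : ℕ} (hi : 2 ≤ i) :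
    ∑' j : {j : ℕ // j ≠ i}, |example1Weight j i| = 2 * (i : ℝ) - 3 := by
  obtain ⟨k, rfl⟩ : ∃ k, i = k + 2 := ⟨i - 2, by omega⟩
  simp_rw [abs_example1Weight_add_two]
  rw [tsum_subtype_ne_eq_tsum (f := fun j =>
      (if j = k + 1 then ((k + 1 : ℕ) : ℝ) else 0) + (if j = k then (k : ℝ) else 0)) (by simp),
    (hasSum_ite_eq _ _).summable.tsum_add (hasSum_ite_eq _ _).summable, tsum_ite_eq, tsum_ite_eq]
  push_cast
  ring

lemma not_bddAbove_tsum_abs_example1Weight_col :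
    ¬ BddAbove (Set.range fun i : ℕ => ∑' j : {j : ℕ // j ≠ i}, |example1Weight j i|) := by
  refine not_bddAbove_of_tendsto_atTop (l := atTop) ?_
  have hcol : (fun i : ℕ => 2 * (i : ℝ) - 3) =ᶠ[atTop]
      fun i => ∑' j : {j : ℕ // j ≠ i}, |example1Weight j i| :=
    eventually_atTop.2 ⟨2, fun i hi => (tsum_abs_example1Weight_col hi).symm⟩
  refine Tendsto.congr' hcol (tendsto_atTop_add_const_right _ _ ?_)
  exact tendsto_natCast_atTop_atTop.const_mul_atTop two_pos

theorem example1_condition_A_not_Dobrushin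
    (W : ℕ → ℕ → ℝ)
    (hW : ∀ i j, W i j =
      if j = i + 1 then -(i : ℝ) else if j = i + 2 then (i : ℝ) else 0) :
    (∀ i : ℕ, 1 ≤ i →
      (∑' j : {j : ℕ // j ≠ i}, max (-(W i j.1)) 0) = (i : ℝ) ∧
      (∑' j : {j : ℕ // j ≠ i}, max (W i j.1) 0) = (i : ℝ)) ∧
    (∀ i : ℕ, 3 ≤ i →
      (∑' j : {j : ℕ // j ≠ i}, |W j.1 i|) = 2 * (i : ℝ) - 3) ∧
    ¬ BddAbove (Set.range fun i : ℕ => ∑' j : {j : ℕ // j ≠ i}, |W j.1 i|) := by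
  obtain rfl : W = example1Weight := funext₂ hW
  exact ⟨fun i _ => ⟨tsum_max_neg_example1Weight i, tsum_max_example1Weight i⟩,
    fun i hi => tsum_abs_example1Weight_col (by omega),
    not_bddAbove_tsum_abs_example1Weight_col⟩
end

section
/- Define synaptic weights W : ℕ × ℕ → ℝ (indices i ≥ 1) by W_{i,i+1} = −i, W_{ij} = 1 for i+2 ≤ j ≤ 2i, and W_{ij} = 0 otherwise. Then: (1) for every i ≥ 1, ∑_{j≠i} max(W_{ij}, 0) = i − 1 < i = ∑_{j≠i} max(−W_{ij}, 0), so condition (A) holds; (2) for every i ≥ 2, ∑_{j≠i} |W_{ji}| ≥ i − 1; in particular sup_i ∑_{j≠i} |W_{ji}| = ∞, so the Dobrushin condition fails. -/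
/-! Row `i` carries the single inhibitory weight `-i` (at `j = i + 1`) against `i - 1` excitatory
weights `1` (at `i + 2 ≤ j ≤ 2i`), so condition (A) holds with one unit to spare. Column `i`,
however, contains the entry `W (i - 1) i = -(i - 1)`, so the column sums are unbounded. -/

open Filter

theorem tsum_subtype_ne_of_eq_zero {α β : Type*} [AddCommMonoid α] [TopologicalSpace α]
    (f : β → α) {i : β} (hf : f i = 0) : ∑' j : {j // j ≠ i}, f j = ∑' j, f j :=
  tsum_subtype_eq_of_support_subset (s := {j | j ≠ i}) fun _ hj h => hj (h ▸ hf)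

def growingRangeWeight (i j : ℕ) : ℝ :=
  if j = i + 1 then -(i : ℝ) else if i + 2 ≤ j ∧ j ≤ 2 * i then 1 else 0

namespace growingRangeWeight

theorem self_eq_zero (i : ℕ) : growingRangeWeight i i = 0 := by
  simp [growingRangeWeight]

theorem eq_zero_of_le {i j : ℕ} (h : i ≤ j) : growingRangeWeight j i = 0 := by
  rw [growingRangeWeight, if_neg (by omega), if_neg (by omega)]

theorem max_zero_eq_ite (i j : ℕ) :
    max (growingRangeWeight i j) 0 = if j ∈ Finset.Icc (i + 2) (2 * i) then 1 else 0 := by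
  simp only [growingRangeWeight, Finset.mem_Icc]
  split_ifs <;> first | omega | simp

theorem max_neg_zero_eq_ite (i j : ℕ) :
    max (-growingRangeWeight i j) 0 = if j = i + 1 then (i : ℝ) else 0 := by
  unfold growingRangeWeight
  split_ifs <;> simp

theorem tsum_max_zero {i : ℕ} (hi : 1 ≤ i) :
    ∑' j : {j // j ≠ i}, max (growingRangeWeight i j) 0 = (i : ℝ) - 1 := by
  rw [tsum_subtype_ne_of_eq_zero (fun j => max (growingRangeWeight i j) 0)
    (by simp [self_eq_zero])]
  simp only [max_zero_eq_ite]
  rw [tsum_eq_sum (s := Finset.Icc (i + 2) (2 * i)) (by simp_all), Finset.sum_ite_mem,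
    Finset.inter_self, Finset.sum_const, Nat.card_Icc, nsmul_one,
    show 2 * i + 1 - (i + 2) = i - 1 by omega, Nat.cast_pred hi]

theorem tsum_max_neg_zero (i : ℕ) :
    ∑' j : {j // j ≠ i}, max (-growingRangeWeight i j) 0 = i := by
  rw [tsum_subtype_ne_of_eq_zero (fun j => max (-growingRangeWeight i j) 0)
    (by simp [self_eq_zero])]
  simp only [max_neg_zero_eq_ite, tsum_ite_eq]

theorem sub_one_le_tsum_abs_column {i : ℕ} (hi : 1 ≤ i) :
    (i : ℝ) - 1 ≤ ∑' j : {j // j ≠ i}, |growingRangeWeight j i| := by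
  rw [tsum_subtype_ne_of_eq_zero (fun j => |growingRangeWeight j i|) (by simp [self_eq_zero])]
  have hsum : Summable fun j => |growingRangeWeight j i| :=
    summable_of_ne_finset_zero (s := Finset.range i) fun j hj => by
      simp [eq_zero_of_le (by simpa using hj)]
  calc (i : ℝ) - 1 = |growingRangeWeight (i - 1) i| := by
        rw [growingRangeWeight, if_pos (by omega), abs_neg, Nat.abs_cast, Nat.cast_pred hi]
    _ ≤ _ := hsum.le_tsum _ fun _ _ => abs_nonneg _

end growingRangeWeight

open growingRangeWeight in
theorem example2_condition_A_not_Dobrushin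
    (W : ℕ → ℕ → ℝ)
    (hW : ∀ i j, W i j =
      if j = i + 1 then -(i : ℝ) else if i + 2 ≤ j ∧ j ≤ 2 * i then 1 else 0) :
    (∀ i : ℕ, 1 ≤ i →
      (∑' j : {j : ℕ // j ≠ i}, max (W i j.1) 0) = (i : ℝ) - 1 ∧
      (∑' j : {j : ℕ // j ≠ i}, max (-(W i j.1)) 0) = (i : ℝ) ∧
      (∑' j : {j : ℕ // j ≠ i}, max (W i j.1) 0) <
        (∑' j : {j : ℕ // j ≠ i}, max (-(W i j.1)) 0)) ∧
    (∀ i : ℕ, 2 ≤ i →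
      (i : ℝ) - 1 ≤ ∑' j : {j : ℕ // j ≠ i}, |W j.1 i|) ∧
    ¬ BddAbove (Set.range fun i : ℕ => ∑' j : {j : ℕ // j ≠ i}, |W j.1 i|) := by
  obtain rfl : W = growingRangeWeight := funext₂ hW
  have hcol (i : ℕ) (hi : 1 ≤ i) := sub_one_le_tsum_abs_column hi
  refine ⟨fun i hi => ⟨tsum_max_zero hi, tsum_max_neg_zero i, ?_⟩,
    fun i hi => hcol i (by omega), ?_⟩
  · rw [tsum_max_zero hi, tsum_max_neg_zero]
    exact sub_one_lt _
  · refine not_bddAbove_of_tendsto_atTop (tendsto_atTop_mono' atTop ?_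
      (tendsto_atTop_add_const_right atTop (-1) tendsto_natCast_atTop_atTop))
    filter_upwards [eventually_ge_atTop 1] with i hi
    simpa [sub_eq_add_neg] using hcol i hi
end

section
/- Define synaptic weights W : ℕ × ℕ → ℝ (indices i ≥ 1) by W_{i,i−1} = i + 1 (for i ≥ 2), W_{i,i+1} = −i, and W_{ij} = 0 otherwise. Then: (1) for every i ≥ 2, ∑_{j≠i} max(W_{ij}, 0) − ∑_{j≠i} max(−W_{ij}, 0) = 1, so sup_{i≥2} (∑_{j≠i} w_{ij} − ∑_{j≠i} v_{ij}) = 1 < ∞ and condition (C) (controlled dominance of positive weights) holds; (2) for every i ≥ 1, ∑_{j≠i} |W_{ji}| = 2i + 1; in particular sup_i ∑_{j≠i} |W_{ji}| = ∞, so the Dobrushin condition fails. -/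
/-- tsum over the subtype {j ≠ i} of a function supported on two points. -/
lemma tsum_pair_aux {i a b : ℕ} (f : ℕ → ℝ) (ha : a ≠ i) (hb : b ≠ i) (hab : a ≠ b)
    (h0 : ∀ j, j ≠ i → j ≠ a → j ≠ b → f j = 0) :
    ∑' j : {j : ℕ // j ≠ i}, f j.1 = f a + f b := by
  have := tsum_eq_sum (L := SummationFilter.unconditional _) (f := fun j : {j : ℕ // j ≠ i} => f j.1)
    (s := ({⟨a, ha⟩, ⟨b, hb⟩} : Finset {j : ℕ // j ≠ i})) ?_
  · rw [this, Finset.sum_pair (by simp [Subtype.ext_iff, hab])]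
  · intro j hj
    simp only [Finset.mem_insert, Finset.mem_singleton] at hj
    push_neg at hj
    exact h0 j j.2 (fun h => hj.1 (Subtype.ext h)) (fun h => hj.2 (Subtype.ext h))

/- STATEMENT 14: Example 4 of the paper: the weights W_{i,i−1} = i+1 (for i ≥ 2),
W_{i,i+1} = −i (and 0 otherwise) satisfy condition (C) (controlled dominance of the
positive weights) but violate the Dobrushin condition. -/
theorem example4_condition_C_not_Dobrushin
    (W : ℕ → ℕ → ℝ)
    (hW : ∀ i j, W i j =
      if 2 ≤ i ∧ j = i - 1 then (i : ℝ) + 1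
      else if j = i + 1 then -(i : ℝ) else 0) :
    (∀ i : ℕ, 2 ≤ i →
      (∑' j : {j : ℕ // j ≠ i}, max (W i j.1) 0) -
        (∑' j : {j : ℕ // j ≠ i}, max (-(W i j.1)) 0) = 1) ∧
    (∀ i : ℕ, 1 ≤ i →
      (∑' j : {j : ℕ // j ≠ i}, |W j.1 i|) = 2 * (i : ℝ) + 1) ∧
    ¬ BddAbove (Set.range fun i : ℕ => ∑' j : {j : ℕ // j ≠ i}, |W j.1 i|) := by
  have key2 : ∀ i : ℕ, 1 ≤ i → (∑' j : {j : ℕ // j ≠ i}, |W j.1 i|) = 2 * (i : ℝ) + 1 := by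
    intro i hi
    have ha : i - 1 ≠ i := by omega
    have hb : i + 1 ≠ i := by omega
    have hab : i - 1 ≠ i + 1 := by omega
    rw [tsum_pair_aux (fun j => |W j i|) ha hb hab]
    · have h1 : W (i - 1) i = -((i : ℝ) - 1) := by
        rw [hW]
        have h2 : ¬ (2 ≤ i - 1 ∧ i = i - 1 - 1) := by omega
        have h3 : i = i - 1 + 1 := by omega
        rw [if_neg h2, if_pos h3]
        have : ((i - 1 : ℕ) : ℝ) = (i : ℝ) - 1 := by
          push_cast [hi]; ring
        rw [this]
      have h2 : W (i + 1) i = (i : ℝ) + 2 := by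
        rw [hW]
        rw [if_pos ⟨by omega, by omega⟩]
        push_cast; ring
      have hipos : (1 : ℝ) ≤ (i : ℝ) := by exact_mod_cast hi
      rw [h1, h2, abs_neg, abs_of_nonneg (by linarith), abs_of_nonneg (by linarith)]
      ring
    · intro j hji hja hjb
      show |W j i| = 0
      rw [hW]
      have h2 : ¬ (2 ≤ j ∧ i = j - 1) := by omega
      have h3 : i ≠ j + 1 := by omega
      rw [if_neg h2, if_neg h3, abs_zero]
  refine ⟨?_, key2, ?_⟩
  · intro i hi
    have ha : i - 1 ≠ i := by omega
    have hb : i + 1 ≠ i := by omega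
    have hab : i - 1 ≠ i + 1 := by omega
    have hWa : W i (i - 1) = (i : ℝ) + 1 := by
      rw [hW, if_pos ⟨hi, rfl⟩]
    have hWb : W i (i + 1) = -(i : ℝ) := by
      rw [hW]
      have h2 : ¬ (2 ≤ i ∧ i + 1 = i - 1) := by omega
      rw [if_neg h2, if_pos rfl]
    have h0 : ∀ j, j ≠ i → j ≠ i - 1 → j ≠ i + 1 → W i j = 0 := by
      intro j hji hja hjb
      rw [hW]
      rw [if_neg (by omega), if_neg (by omega)]
    have hipos : (1 : ℝ) ≤ (i : ℝ) := by exact_mod_cast le_trans (by norm_num) hi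
    rw [tsum_pair_aux (fun j => max (W i j) 0) ha hb hab
        (by intro j h1 h2 h3; simp [h0 j h1 h2 h3]),
      tsum_pair_aux (fun j => max (-(W i j)) 0) ha hb hab
        (by intro j h1 h2 h3; simp [h0 j h1 h2 h3])]
    simp only [hWa, hWb, neg_neg]
    rw [max_eq_left (by linarith), max_eq_right (by linarith),
      max_eq_right (by linarith), max_eq_left (by linarith)]
    ring
  · rintro ⟨M, hM⟩
    obtain ⟨n, hn⟩ := exists_nat_gt ((M - 1) / 2)
    have hmem : (2 * ((n + 1 : ℕ) : ℝ) + 1) ∈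
        Set.range fun i : ℕ => ∑' j : {j : ℕ // j ≠ i}, |W j.1 i| := by
      exact ⟨n + 1, key2 (n + 1) (by omega)⟩
    have := hM hmem
    push_cast at this
    nlinarith [this, hn]
end

section
/- Define synaptic weights W : ℕ × ℕ → ℝ (indices i, j ≥ 1, i ≠ j) by W_{ij} = −2 if |i − j| = 1, W_{ij} = 1 if |i − j| is even, and W_{ij} = −1 if |i − j| is odd and ≥ 3. Then: (1) for every i ≥ 1 and every k ≥ 1, ∑_{j : 0 < |j−i| ≤ k} max(−W_{ij}, 0) ≥ ∑_{j : 0 < |j−i| ≤ k} max(W_{ij}, 0), so condition (D) (infinite-range interactions with negative weights dominating at every finite range) holds; (2) for every i ≥ 1, |W_{ji}| ≥ 1 for all j ≠ i, hence the series ∑_{j≠i} |W_{ji}| diverges, so the Dobrushin condition fails. -/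
/-!
Write `W i j = w |i - j|`. Only even distances carry a positive weight, namely `1`. Moving such
a `j` one step towards `i` lands at an odd distance `d - 1 ≥ 1` within the same range, where the
weight is `≤ -1`; this step is injective on distances `≥ 2`, so at every range `k` the positive
parts are dominated term by term by negative parts. Since every `|W j i| ≥ 1` and there are
infinitely many `j`, the Dobrushin series diverges.
-/

open Finset

theorem tsum_subtype_eq_sum_of_iff {α β : Type*} [AddCommMonoid β] [TopologicalSpace β]
    {p : α → Prop} (t : Finset α) (hp : ∀ a, p a ↔ a ∈ t) (f : α → β) :
    ∑' a : {a // p a}, f a = ∑ a ∈ t, f a := by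
  obtain rfl : p = (· ∈ t) := funext fun a => propext (hp a)
  exact t.tsum_subtype f

theorem Finset.sum_le_sum_of_injOn {ι κ M : Type*} [AddCommMonoid M] [PartialOrder M]
    [IsOrderedAddMonoid M] {s : Finset ι} {t : Finset κ} {f : ι → M} {g : κ → M} (e : ι → κ)
    (he : Set.InjOn e s) (hst : Set.MapsTo e s t) (hg : ∀ j ∈ t, 0 ≤ g j)
    (hfg : ∀ i ∈ s, f i ≤ g (e i)) : ∑ i ∈ s, f i ≤ ∑ j ∈ t, g j := by
  classical
  calc ∑ i ∈ s, f i ≤ ∑ i ∈ s, g (e i) := sum_le_sum hfg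
    _ = ∑ j ∈ s.image e, g j := (sum_image he).symm
    _ ≤ ∑ j ∈ t, g j :=
      sum_le_sum_of_subset_of_nonneg (image_subset_iff.mpr hst) fun j hj _ => hg j hj

theorem not_summable_of_forall_le {ι : Type*} [Infinite ι] {f : ι → ℝ} {c : ℝ} (hc : 0 < c)
    (hf : ∀ i, c ≤ f i) : ¬ Summable f := fun hsum =>
  hc.ne' <| (summable_const_iff c).mp <| .of_nonneg_of_le (fun _ => hc.le) hf hsum

def example5Weight (d : ℕ) : ℝ :=
  if d = 1 then -2 else if d % 2 = 0 then 1 else -1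

theorem example5Weight_of_even {d : ℕ} (hd : d % 2 = 0) : example5Weight d = 1 := by
  rw [example5Weight, if_neg (by omega), if_pos hd]

theorem example5Weight_le_neg_one_of_odd {d : ℕ} (hd : d % 2 = 1) : example5Weight d ≤ -1 := by
  unfold example5Weight
  split_ifs <;> first | omega | norm_num

theorem max_example5Weight_zero_of_odd {d : ℕ} (hd : d % 2 = 1) :
    max (example5Weight d) 0 = 0 :=
  max_eq_right <| (example5Weight_le_neg_one_of_odd hd).trans (by norm_num)

theorem one_le_abs_example5Weight (d : ℕ) : 1 ≤ |example5Weight d| := by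
  unfold example5Weight
  split_ifs <;> norm_num

def stepToward (i j : ℕ) : ℕ :=
  if j < i then j + 1 else j - 1

theorem dist_stepToward {i j : ℕ} (hj : j ≠ i) :
    Nat.dist (stepToward i j) i = Nat.dist j i - 1 := by
  unfold stepToward Nat.dist
  split_ifs <;> omega

theorem injOn_stepToward (i : ℕ) : Set.InjOn (stepToward i) {j | 2 ≤ Nat.dist j i} := by
  intro a ha b hb hab
  simp only [Set.mem_ofPred_eq, Nat.dist] at ha hb
  unfold stepToward at hab
  split_ifs at hab <;> omega

def puncturedNbhd (i k : ℕ) : Finset ℕ :=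
  (Icc (i - k) (i + k)).erase i

theorem mem_puncturedNbhd {i j k : ℕ} : j ∈ puncturedNbhd i k ↔ j ≠ i ∧ Nat.dist j i ≤ k := by
  simp only [puncturedNbhd, mem_erase, mem_Icc, Nat.dist]
  omega

theorem stepToward_mem_puncturedNbhd {i j k : ℕ} (h2 : 2 ≤ Nat.dist j i)
    (hk : Nat.dist j i ≤ k) : stepToward i j ∈ puncturedNbhd i k := by
  have hstep := dist_stepToward (i := i) (j := j) (by rintro rfl; simp at h2)
  refine mem_puncturedNbhd.mpr ⟨fun h => ?_, by omega⟩
  rw [h, Nat.dist_self] at hstep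
  omega

theorem max_example5Weight_le_max_neg_pred {d : ℕ} (h2 : 2 ≤ d) (hd : d % 2 = 0) :
    max (example5Weight d) 0 ≤ max (-example5Weight (d - 1)) 0 := by
  rw [example5Weight_of_even hd, max_eq_left zero_le_one]
  have := example5Weight_le_neg_one_of_odd (d := d - 1) (by omega)
  exact le_max_of_le_left (by linarith)

theorem sum_max_example5Weight_le (i k : ℕ) :
    ∑ j ∈ puncturedNbhd i k, max (example5Weight (Nat.dist j i)) 0 ≤
      ∑ j ∈ puncturedNbhd i k, max (-example5Weight (Nat.dist j i)) 0 := by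
  set s := (puncturedNbhd i k).filter fun j => Nat.dist j i % 2 = 0
  have hs : ∀ j ∈ s, 2 ≤ Nat.dist j i ∧ Nat.dist j i ≤ k ∧ Nat.dist j i % 2 = 0 := by
    intro j hj
    obtain ⟨hjN, heven⟩ := mem_filter.mp hj
    obtain ⟨hji, hk⟩ := mem_puncturedNbhd.mp hjN
    have : Nat.dist j i ≠ 0 := fun h => hji (Nat.eq_of_dist_eq_zero h)
    omega
  have h_support : ∀ j ∈ puncturedNbhd i k, max (example5Weight (Nat.dist j i)) 0 ≠ 0 →
      Nat.dist j i % 2 = 0 := fun j _ hj => by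
    by_contra hodd
    exact hj (max_example5Weight_zero_of_odd (by omega))
  rw [← sum_filter_of_ne h_support]
  refine sum_le_sum_of_injOn (stepToward i) ((injOn_stepToward i).mono fun j hj => (hs j hj).1)
    (fun j hj => stepToward_mem_puncturedNbhd (hs j hj).1 (hs j hj).2.1)
    (fun _ _ => le_max_right _ _) (fun j hj => ?_)
  obtain ⟨h2, -, heven⟩ := hs j hj
  rw [dist_stepToward (by rintro rfl; simp at h2)]
  exact max_example5Weight_le_max_neg_pred h2 heven

theorem example5_condition_D_not_Dobrushin
    (W : ℕ → ℕ → ℝ)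
    (hW : ∀ i j, i ≠ j → W i j =
      if Nat.dist i j = 1 then -2
      else if Nat.dist i j % 2 = 0 then 1 else -1) :
    (∀ i : ℕ, 1 ≤ i → ∀ k : ℕ, 1 ≤ k →
      (∑' j : {j : ℕ // j ≠ i ∧ Nat.dist j i ≤ k}, max (W i j.1) 0) ≤
      (∑' j : {j : ℕ // j ≠ i ∧ Nat.dist j i ≤ k}, max (-(W i j.1)) 0)) ∧
    (∀ i : ℕ, 1 ≤ i → ∀ j : ℕ, j ≠ i → 1 ≤ |W j i|) ∧
    (∀ i : ℕ, 1 ≤ i → ¬ Summable (fun j : {j : ℕ // j ≠ i} => |W j.1 i|)) := by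
  have hW_eq : ∀ i j, j ≠ i → W i j = example5Weight (Nat.dist j i) := fun i j hj => by
    rw [hW i j hj.symm, Nat.dist_comm, example5Weight]
  have h_abs : ∀ i j, j ≠ i → 1 ≤ |W j i| := fun i j hj => by
    rw [hW_eq j i hj.symm]
    exact one_le_abs_example5Weight _
  refine ⟨fun i _ k _ => ?_, fun i _ => h_abs i, fun i _ => ?_⟩
  · have hN (j : ℕ) := (mem_puncturedNbhd (i := i) (j := j) (k := k)).symm
    rw [tsum_subtype_eq_sum_of_iff _ hN fun j => max (W i j) 0,
      tsum_subtype_eq_sum_of_iff _ hN fun j => max (-W i j) 0]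
    calc ∑ j ∈ puncturedNbhd i k, max (W i j) 0
        = ∑ j ∈ puncturedNbhd i k, max (example5Weight (Nat.dist j i)) 0 :=
          sum_congr rfl fun j hj => by rw [hW_eq i j (mem_puncturedNbhd.mp hj).1]
      _ ≤ ∑ j ∈ puncturedNbhd i k, max (-example5Weight (Nat.dist j i)) 0 :=
          sum_max_example5Weight_le i k
      _ = ∑ j ∈ puncturedNbhd i k, max (-W i j) 0 :=
          sum_congr rfl fun j hj => by rw [hW_eq i j (mem_puncturedNbhd.mp hj).1]
  · have : Infinite {j : ℕ // j ≠ i} := (Set.finite_singleton i).infinite_compl.to_subtype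
    exact not_summable_of_forall_le one_pos fun j => h_abs i j j.2
end
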